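/- arXiv:2510.00850 — 8 statements merged into one kernel-verified Lean document; each statement's English description precedes it below -/
import Mathlib

section
/- For every x : {1,...,N} → {0,1}, the set of attainable objective values coincides: {Obj(x,y) : y feasible for formulation (8) given x} = {Obj'(x,z) : z feasible for the exclusion set formulation (9) given x}. In other words, the mixed-integer linear programs (8) and (9) are equivalent. -/
/-- Constraint (a): sums of the `y` variables over the `L` most preferred products agree
across rankings whose sets of `L` most preferred products coincide. -/
def EqConstr (K : ℕ) (i : ℕ → ℕ → ℕ) (Lk : ℕ → ℕ) (y : ℕ → ℕ → ℝ) : Prop :=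
  ∀ k k' L, 1 ≤ k → k ≤ K → 1 ≤ k' → k' ≤ K → 1 ≤ L → L ≤ Lk k →
    Finset.image (i k) (Finset.Icc 1 L) = Finset.image (i k') (Finset.Icc 1 L) →
    ∑ ℓ ∈ Finset.Icc 1 L, y k ℓ = ∑ ℓ ∈ Finset.Icc 1 L, y k' ℓ

/-- Constraints (b), (c), (d): feasibility for formulation (7) given `x`. -/
def Feas7 (K : ℕ) (i : ℕ → ℕ → ℕ) (Lk : ℕ → ℕ) (x : ℕ → ℝ) (y : ℕ → ℕ → ℝ) : Prop :=
  (∀ k, 1 ≤ k → k ≤ K → ∑ ℓ ∈ Finset.Icc 1 (Lk k), y k ℓ ≤ 1) ∧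
  (∀ k ℓ, 1 ≤ k → k ≤ K → 1 ≤ ℓ → ℓ ≤ Lk k →
    x (i k ℓ) ≤ ∑ ℓ' ∈ Finset.Icc 1 ℓ, y k ℓ') ∧
  (∀ k ℓ, 1 ≤ k → k ≤ K → 1 ≤ ℓ → ℓ ≤ Lk k → 0 ≤ y k ℓ ∧ y k ℓ ≤ x (i k ℓ))

/-- Feasibility for formulation (8) given `x`: constraints (a), (b), (c), (d). -/
def Feas8 (K : ℕ) (i : ℕ → ℕ → ℕ) (Lk : ℕ → ℕ) (x : ℕ → ℝ) (y : ℕ → ℕ → ℝ) : Prop :=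
  EqConstr K i Lk y ∧ Feas7 K i Lk x y

/-- The objective value of formulations (7) and (8). -/
noncomputable def ObjY (K : ℕ) (i : ℕ → ℕ → ℕ) (Lk : ℕ → ℕ) (r lam : ℕ → ℝ)
    (y : ℕ → ℕ → ℝ) : ℝ :=
  ∑ k ∈ Finset.Icc 1 K, lam k * ∑ ℓ ∈ Finset.Icc 1 (Lk k), r (i k ℓ) * y k ℓ

/-- `E` is an exclusion set. -/
def IsExcl (K : ℕ) (i : ℕ → ℕ → ℕ) (Lk : ℕ → ℕ) (E : Finset ℕ) : Prop :=
  ∃ k, 1 ≤ k ∧ k ≤ K ∧ ∃ L, L ≤ Lk k ∧ E = Finset.image (i k) (Finset.Icc 1 L)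

/-- `(E, j)` is an exclusion set and continuation pair, i.e. `(E, j) ∈ 𝓟`. -/
def IsPair (K : ℕ) (i : ℕ → ℕ → ℕ) (Lk : ℕ → ℕ) (E : Finset ℕ) (j : ℕ) : Prop :=
  ∃ k, 1 ≤ k ∧ k ≤ K ∧ ∃ L, L + 1 ≤ Lk k ∧
    E = Finset.image (i k) (Finset.Icc 1 L) ∧ j = i k (L + 1)

/-- The probability `λ_{E,j}` of an exclusion set and continuation pair. -/
noncomputable def lamEI (K : ℕ) (i : ℕ → ℕ → ℕ) (lam : ℕ → ℝ) (E : Finset ℕ) (j : ℕ) : ℝ :=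
  ∑ k ∈ Finset.Icc 1 K,
    if Finset.image (i k) (Finset.Icc 1 E.card) = E ∧ i k (E.card + 1) = j then lam k else 0

/-- Feasibility for the exclusion set formulation (9) given `x`. -/
def Feas9 (K : ℕ) (i : ℕ → ℕ → ℕ) (Lk : ℕ → ℕ) (x : ℕ → ℝ) (z : Finset ℕ → ℝ) : Prop :=
  (∀ E j, IsPair K i Lk E j →
    0 ≤ z (insert j E) - z E ∧ z (insert j E) - z E ≤ x j) ∧
  (∀ E j, IsPair K i Lk E j → x j ≤ z (insert j E)) ∧
  (∀ E, IsExcl K i Lk E → z E ≤ 1) ∧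
  z ∅ = 0

/-- The objective value of the exclusion set formulation (9). -/
noncomputable def ObjZ (K : ℕ) (i : ℕ → ℕ → ℕ) (Lk : ℕ → ℕ) (r lam : ℕ → ℝ)
    (z : Finset ℕ → ℝ) : ℝ :=
  ∑ᶠ (p : Finset ℕ × ℕ) (_ : IsPair K i Lk p.1 p.2),
    r p.2 * lamEI K i lam p.1 p.2 * (z (insert p.2 p.1) - z p.1)


/-!
Write `P_k(L)` for the set of the `L` most preferred products of ranking `k`. The two
formulations correspond through `z(P_k(L)) = y_{k,1} + ⋯ + y_{k,L}`: constraint (a) of (8) is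
exactly what makes this a well-defined function of the exclusion set, and conversely the
increments of `z` along each ranking form a feasible `y`. The objectives agree because the pairs
`(E, i)` that ranking `k` contributes to `λ_{E,i}` are exactly `(P_k(ℓ - 1), i_k(ℓ))` with
`ℓ ≤ L_k`: continuing ranking `k` past position `L_k` would put the no-purchase option into `E`
or make it `i`, and no pair of `𝓟` does either.
-/

open Finset

def prefixSet (f : ℕ → ℕ) (L : ℕ) : Finset ℕ := (Icc 1 L).image f

section prefixSet

variable {f : ℕ → ℕ} {L M ℓ : ℕ}

@[simp]
lemma prefixSet_zero (f : ℕ → ℕ) : prefixSet f 0 = ∅ := by simp [prefixSet]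

lemma prefixSet_succ (f : ℕ → ℕ) (L : ℕ) :
    prefixSet f (L + 1) = insert (f (L + 1)) (prefixSet f L) := by
  rw [prefixSet, prefixSet, ← insert_Icc_right_eq_Icc_add_one (by omega), image_insert]

lemma insert_prefixSet_pred (hℓ : 1 ≤ ℓ) :
    insert (f ℓ) (prefixSet f (ℓ - 1)) = prefixSet f ℓ := by
  obtain ⟨L, rfl⟩ := Nat.exists_eq_add_of_le' hℓ
  rw [Nat.add_sub_cancel, prefixSet_succ]

lemma apply_mem_prefixSet (h1 : 1 ≤ ℓ) (hℓ : ℓ ≤ L) : f ℓ ∈ prefixSet f L :=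
  mem_image_of_mem f (mem_Icc.2 ⟨h1, hℓ⟩)

lemma card_prefixSet (hf : Set.InjOn f (Set.Icc 1 M)) (hL : L ≤ M) :
    (prefixSet f L).card = L := by
  rw [prefixSet, card_image_of_injOn (hf.mono (by simpa using Set.Icc_subset_Icc_right hL)),
    Nat.card_Icc, Nat.add_sub_cancel]

lemma apply_notMem_prefixSet (hf : Set.InjOn f (Set.Icc 1 M)) (hL : L < ℓ) (hℓ : ℓ ≤ M) :
    f ℓ ∉ prefixSet f L := by
  simp only [prefixSet, mem_image, mem_Icc, not_exists, not_and]
  intro ℓ' hℓ' heq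
  have := hf ⟨hℓ'.1, by omega⟩ ⟨by omega, hℓ⟩ heq
  omega

end prefixSet

section pairs

variable {K : ℕ} {i : ℕ → ℕ → ℕ} {Lk : ℕ → ℕ}

def pairFinset (K : ℕ) (i : ℕ → ℕ → ℕ) (Lk : ℕ → ℕ) : Finset (Finset ℕ × ℕ) :=
  (Icc 1 K).biUnion fun k => (range (Lk k)).image fun L => (prefixSet (i k) L, i k (L + 1))

lemma mem_pairFinset {p : Finset ℕ × ℕ} : p ∈ pairFinset K i Lk ↔ IsPair K i Lk p.1 p.2 := by
  simp only [pairFinset, mem_biUnion, mem_Icc, mem_image, mem_range, IsPair, prefixSet,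
    Prod.ext_iff, eq_comm (a := p.1), eq_comm (a := p.2), and_assoc]
  rfl

lemma finsum_isPair_eq_sum (g : Finset ℕ × ℕ → ℝ) :
    ∑ᶠ (p : Finset ℕ × ℕ) (_ : IsPair K i Lk p.1 p.2), g p = ∑ p ∈ pairFinset K i Lk, g p := by
  rw [← finsum_mem_coe_finset]
  congr! with p
  simp [mem_pairFinset]

lemma card_lt_of_isPair (hinj : ∀ k, 1 ≤ k → k ≤ K → Set.InjOn (i k) (Set.Icc 1 (Lk k + 1)))
    {o : ℕ} (hcut : ∀ k, 1 ≤ k → k ≤ K → i k (Lk k + 1) = o) {k : ℕ} (hk1 : 1 ≤ k)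
    (hk2 : k ≤ K) {E : Finset ℕ} {j : ℕ} (hpair : IsPair K i Lk E j)
    (hE : prefixSet (i k) E.card = E) (hj : i k (E.card + 1) = j) : E.card < Lk k := by
  obtain ⟨k', hk1', hk2', L, hL, hE', rfl⟩ := hpair
  obtain rfl : E = prefixSet (i k') L := hE'
  have hcard : (prefixSet (i k') L).card = L := card_prefixSet (hinj k' hk1' hk2') (by omega)
  rw [hcard] at hE hj ⊢
  have ho : o ∉ prefixSet (i k') L :=
    hcut k' hk1' hk2' ▸ apply_notMem_prefixSet (hinj k' hk1' hk2') (by omega) le_rfl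
  have hjo : i k' (L + 1) ≠ o := fun h => by
    have := hinj k' hk1' hk2' ⟨by omega, by omega⟩ ⟨by omega, le_rfl⟩
      (h.trans (hcut k' hk1' hk2').symm)
    omega
  by_contra! hle
  rcases hle.lt_or_eq with hlt | rfl
  · exact ho (hE ▸ hcut k hk1 hk2 ▸ apply_mem_prefixSet (by omega) hlt)
  · exact hjo (hj ▸ hcut k hk1 hk2)

end pairs

section objective

variable {K : ℕ} {i : ℕ → ℕ → ℕ} {Lk : ℕ → ℕ}

def yOfZ (i : ℕ → ℕ → ℕ) (z : Finset ℕ → ℝ) (k ℓ : ℕ) : ℝ :=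
  z (prefixSet (i k) ℓ) - z (prefixSet (i k) (ℓ - 1))

lemma filter_pairFinset_eq_image
    (hinj : ∀ k, 1 ≤ k → k ≤ K → Set.InjOn (i k) (Set.Icc 1 (Lk k + 1)))
    {o : ℕ} (hcut : ∀ k, 1 ≤ k → k ≤ K → i k (Lk k + 1) = o) {k : ℕ} (hk1 : 1 ≤ k)
    (hk2 : k ≤ K) :
    (pairFinset K i Lk).filter (fun p => (Icc 1 p.1.card).image (i k) = p.1 ∧
        i k (p.1.card + 1) = p.2) =
      (Icc 1 (Lk k)).image fun ℓ => (prefixSet (i k) (ℓ - 1), i k ℓ) := by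
  ext ⟨E, j⟩
  simp only [mem_filter, mem_pairFinset, mem_image, mem_Icc, Prod.mk.injEq]
  constructor
  · rintro ⟨hpair, hE, hj⟩
    have := card_lt_of_isPair hinj hcut hk1 hk2 hpair hE hj
    exact ⟨E.card + 1, ⟨by omega, by omega⟩, by rw [Nat.add_sub_cancel]; exact hE, hj⟩
  · rintro ⟨ℓ, ⟨hℓ1, hℓ2⟩, rfl, rfl⟩
    have hcard : (prefixSet (i k) (ℓ - 1)).card = ℓ - 1 :=
      card_prefixSet (hinj k hk1 hk2) (by omega)
    refine ⟨⟨k, hk1, hk2, ℓ - 1, by omega, rfl, by rw [Nat.sub_add_cancel hℓ1]⟩, ?_, ?_⟩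
    · rw [hcard]; rfl
    · rw [hcard, Nat.sub_add_cancel hℓ1]

lemma objY_congr (r lam : ℕ → ℝ) {y y' : ℕ → ℕ → ℝ}
    (h : ∀ k ℓ, 1 ≤ k → k ≤ K → 1 ≤ ℓ → ℓ ≤ Lk k → y k ℓ = y' k ℓ) :
    ObjY K i Lk r lam y = ObjY K i Lk r lam y' := by
  refine sum_congr rfl fun k hk => congrArg _ (sum_congr rfl fun ℓ hℓ => ?_)
  rw [h k ℓ (mem_Icc.1 hk).1 (mem_Icc.1 hk).2 (mem_Icc.1 hℓ).1 (mem_Icc.1 hℓ).2]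

lemma objZ_eq_objY_yOfZ
    (hinj : ∀ k, 1 ≤ k → k ≤ K → Set.InjOn (i k) (Set.Icc 1 (Lk k + 1)))
    {o : ℕ} (hcut : ∀ k, 1 ≤ k → k ≤ K → i k (Lk k + 1) = o) (r lam : ℕ → ℝ)
    (z : Finset ℕ → ℝ) :
    ObjZ K i Lk r lam z = ObjY K i Lk r lam (yOfZ i z) := by
  rw [ObjZ, finsum_isPair_eq_sum, ObjY]
  simp_rw [lamEI, mul_sum, sum_mul, mul_ite, ite_mul, mul_zero, zero_mul]
  rw [sum_comm]
  refine sum_congr rfl fun k hk => ?_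
  obtain ⟨hk1, hk2⟩ := mem_Icc.1 hk
  rw [← sum_filter, filter_pairFinset_eq_image hinj hcut hk1 hk2, sum_image]
  · refine sum_congr rfl fun ℓ hℓ => ?_
    rw [yOfZ, insert_prefixSet_pred (mem_Icc.1 hℓ).1]
    ring
  · intro ℓ hℓ ℓ' hℓ' h
    simp only [coe_Icc, Set.mem_Icc] at hℓ hℓ'
    exact hinj k hk1 hk2 ⟨hℓ.1, by omega⟩ ⟨hℓ'.1, by omega⟩ (Prod.ext_iff.1 h).2

end objective

section feasibility

variable {K : ℕ} {i : ℕ → ℕ → ℕ} {Lk : ℕ → ℕ} {x : ℕ → ℝ}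

lemma sum_yOfZ (z : Finset ℕ → ℝ) (k L : ℕ) :
    ∑ ℓ ∈ Icc 1 L, yOfZ i z k ℓ = z (prefixSet (i k) L) - z ∅ := by
  induction L with
  | zero => simp
  | succ L ih => rw [sum_Icc_succ_top (by omega), ih, yOfZ, Nat.add_sub_cancel]; ring

lemma feas8_yOfZ {z : Finset ℕ → ℝ} (hz : Feas9 K i Lk x z) : Feas8 K i Lk x (yOfZ i z) := by
  obtain ⟨hstep, hcover, hle, hempty⟩ := hz
  have hsum (k L : ℕ) : ∑ ℓ ∈ Icc 1 L, yOfZ i z k ℓ = z (prefixSet (i k) L) := by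
    rw [sum_yOfZ, hempty, sub_zero]
  have hpair {k ℓ : ℕ} (hk1 : 1 ≤ k) (hk2 : k ≤ K) (hℓ1 : 1 ≤ ℓ) (hℓ2 : ℓ ≤ Lk k) :
      IsPair K i Lk (prefixSet (i k) (ℓ - 1)) (i k ℓ) :=
    ⟨k, hk1, hk2, ℓ - 1, by omega, rfl, by rw [Nat.sub_add_cancel hℓ1]⟩
  refine ⟨fun k k' L _ _ _ _ _ _ hkk' => ?_, fun k hk1 hk2 => ?_,
    fun k ℓ hk1 hk2 hℓ1 hℓ2 => ?_, fun k ℓ hk1 hk2 hℓ1 hℓ2 => ?_⟩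
  · rw [hsum, hsum]
    exact congrArg z hkk'
  · rw [hsum]
    exact hle _ ⟨k, hk1, hk2, Lk k, le_rfl, rfl⟩
  · rw [hsum, ← insert_prefixSet_pred hℓ1]
    exact hcover _ _ (hpair hk1 hk2 hℓ1 hℓ2)
  · rw [yOfZ, ← insert_prefixSet_pred hℓ1]
    exact hstep _ _ (hpair hk1 hk2 hℓ1 hℓ2)

open Classical in
noncomputable def zOfY (K : ℕ) (i : ℕ → ℕ → ℕ) (Lk : ℕ → ℕ) (y : ℕ → ℕ → ℝ) (E : Finset ℕ) :
    ℝ :=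
  if h : ∃ k, 1 ≤ k ∧ k ≤ K ∧ E.card ≤ Lk k ∧ prefixSet (i k) E.card = E then
    ∑ ℓ ∈ Icc 1 E.card, y h.choose ℓ
  else 0

lemma zOfY_empty (y : ℕ → ℕ → ℝ) : zOfY K i Lk y ∅ = 0 := by
  unfold zOfY
  split_ifs <;> simp

lemma zOfY_prefixSet (hinj : ∀ k, 1 ≤ k → k ≤ K → Set.InjOn (i k) (Set.Icc 1 (Lk k)))
    {y : ℕ → ℕ → ℝ} (hy : EqConstr K i Lk y) {k L : ℕ} (hk1 : 1 ≤ k) (hk2 : k ≤ K)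
    (hL : L ≤ Lk k) : zOfY K i Lk y (prefixSet (i k) L) = ∑ ℓ ∈ Icc 1 L, y k ℓ := by
  have hcard : (prefixSet (i k) L).card = L := card_prefixSet (hinj k hk1 hk2) hL
  have hex : ∃ k', 1 ≤ k' ∧ k' ≤ K ∧ (prefixSet (i k) L).card ≤ Lk k' ∧
      prefixSet (i k') (prefixSet (i k) L).card = prefixSet (i k) L :=
    ⟨k, hk1, hk2, hcard.symm ▸ hL, by rw [hcard]⟩
  rw [zOfY, dif_pos hex]
  obtain ⟨h1, h2, h3, h4⟩ := hex.choose_spec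
  generalize hex.choose = k' at h1 h2 h3 h4 ⊢
  rw [hcard] at h3 h4 ⊢
  rcases Nat.eq_zero_or_pos L with rfl | hL0
  · simp
  · exact hy _ k L h1 h2 hk1 hk2 hL0 h3 h4

lemma feas9_zOfY (hinj : ∀ k, 1 ≤ k → k ≤ K → Set.InjOn (i k) (Set.Icc 1 (Lk k)))
    {y : ℕ → ℕ → ℝ} (hy : Feas8 K i Lk x y) : Feas9 K i Lk x (zOfY K i Lk y) := by
  obtain ⟨hconsist, htotal, hcover, hbound⟩ := hy
  have hz {k L : ℕ} (hk1 : 1 ≤ k) (hk2 : k ≤ K) (hL : L ≤ Lk k) :=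
    zOfY_prefixSet hinj hconsist hk1 hk2 hL
  refine ⟨?_, ?_, ?_, zOfY_empty y⟩
  · rintro E j ⟨k, hk1, hk2, L, hL, hE, rfl⟩
    obtain rfl : E = prefixSet (i k) L := hE
    rw [← prefixSet_succ, hz hk1 hk2 hL, hz hk1 hk2 (by omega),
      sum_Icc_succ_top (by omega), add_sub_cancel_left]
    exact hbound k (L + 1) hk1 hk2 (by omega) hL
  · rintro E j ⟨k, hk1, hk2, L, hL, hE, rfl⟩
    obtain rfl : E = prefixSet (i k) L := hE
    rw [← prefixSet_succ, hz hk1 hk2 hL]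
    exact hcover k (L + 1) hk1 hk2 (by omega) hL
  · rintro E ⟨k, hk1, hk2, L, hL, hE⟩
    obtain rfl : E = prefixSet (i k) L := hE
    rw [hz hk1 hk2 hL]
    refine (sum_le_sum_of_subset_of_nonneg (Icc_subset_Icc_right hL) ?_).trans (htotal k hk1 hk2)
    intro ℓ hℓ _
    exact (hbound k ℓ hk1 hk2 (mem_Icc.1 hℓ).1 (mem_Icc.1 hℓ).2).1

lemma yOfZ_zOfY (hinj : ∀ k, 1 ≤ k → k ≤ K → Set.InjOn (i k) (Set.Icc 1 (Lk k)))
    {y : ℕ → ℕ → ℝ} (hy : EqConstr K i Lk y) {k ℓ : ℕ} (hk1 : 1 ≤ k) (hk2 : k ≤ K)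
    (hℓ1 : 1 ≤ ℓ) (hℓ2 : ℓ ≤ Lk k) : yOfZ i (zOfY K i Lk y) k ℓ = y k ℓ := by
  obtain ⟨L, rfl⟩ := Nat.exists_eq_add_of_le' hℓ1
  rw [yOfZ, zOfY_prefixSet hinj hy hk1 hk2 hℓ2, zOfY_prefixSet hinj hy hk1 hk2 (by omega),
    Nat.add_sub_cancel, sum_Icc_succ_top (by omega), add_sub_cancel_left]

end feasibility

theorem stmt1_general
    (N K : ℕ)
    (i : ℕ → ℕ → ℕ)
    (hbij : ∀ k, 1 ≤ k → k ≤ K →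
      Set.BijOn (i k) (Set.Icc 1 (N + 1)) (Set.Icc 1 (N + 1)))
    (Lk : ℕ → ℕ)
    (hLk : ∀ k, 1 ≤ k → k ≤ K → 1 ≤ Lk k ∧ Lk k ≤ N)
    (hLkdef : ∀ k, 1 ≤ k → k ≤ K → i k (Lk k + 1) = N + 1)
    (r : ℕ → ℝ)
    (lam : ℕ → ℝ)
    (x : ℕ → ℝ) :
    {v : ℝ | ∃ y, Feas8 K i Lk x y ∧ ObjY K i Lk r lam y = v} =
    {v : ℝ | ∃ z, Feas9 K i Lk x z ∧ ObjZ K i Lk r lam z = v} := by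
  have hinj : ∀ k, 1 ≤ k → k ≤ K → Set.InjOn (i k) (Set.Icc 1 (Lk k + 1)) := fun k hk1 hk2 =>
    (hbij k hk1 hk2).injOn.mono (Set.Icc_subset_Icc_right (by have := (hLk k hk1 hk2).2; omega))
  have hinj' : ∀ k, 1 ≤ k → k ≤ K → Set.InjOn (i k) (Set.Icc 1 (Lk k)) := fun k hk1 hk2 =>
    (hinj k hk1 hk2).mono (Set.Icc_subset_Icc_right (Nat.le_succ _))
  ext v
  constructor
  · rintro ⟨y, hy, rfl⟩
    refine ⟨zOfY K i Lk y, feas9_zOfY hinj' hy, ?_⟩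
    rw [objZ_eq_objY_yOfZ hinj hLkdef]
    exact objY_congr r lam fun k ℓ hk1 hk2 hℓ1 hℓ2 => yOfZ_zOfY hinj' hy.1 hk1 hk2 hℓ1 hℓ2
  · rintro ⟨z, hz, rfl⟩
    exact ⟨yOfZ i z, feas8_yOfZ hz, (objZ_eq_objY_yOfZ hinj hLkdef r lam z).symm⟩

theorem stmt1
    (N K : ℕ) (hN : 1 ≤ N) (hK : 1 ≤ K)
    (i : ℕ → ℕ → ℕ)
    (hbij : ∀ k, 1 ≤ k → k ≤ K →
      Set.BijOn (i k) (Set.Icc 1 (N + 1)) (Set.Icc 1 (N + 1)))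
    (Lk : ℕ → ℕ)
    (hLk : ∀ k, 1 ≤ k → k ≤ K → 1 ≤ Lk k ∧ Lk k ≤ N)
    (hLkdef : ∀ k, 1 ≤ k → k ≤ K → i k (Lk k + 1) = N + 1)
    (r : ℕ → ℝ) (hrpos : ∀ j, 1 ≤ j → j ≤ N → 0 < r j) (hrN : r (N + 1) = 0)
    (lam : ℕ → ℝ) (hlam : ∀ k, 1 ≤ k → k ≤ K → 0 ≤ lam k)
    (hlamsum : ∑ k ∈ Finset.Icc 1 K, lam k = 1)
    (x : ℕ → ℝ) (hx : ∀ j, 1 ≤ j → j ≤ N → x j = 0 ∨ x j = 1) :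
    {v : ℝ | ∃ y, Feas8 K i Lk x y ∧ ObjY K i Lk r lam y = v} =
    {v : ℝ | ∃ z, Feas9 K i Lk x z ∧ ObjZ K i Lk r lam z = v} :=
  stmt1_general N K i hbij Lk hLk hLkdef r lam x
end

section
/- Consider the cardinality constraint Σ_{i=1}^N x(i) ≤ 1 (at most one product besides the no-purchase option is offered). Then the following three suprema of real numbers are equal: (a) sup{Obj(x,y) : x : {1,...,N} → [0,1] with Σ_{i=1}^N x(i) ≤ 1, y feasible for formulation (7) given x}; (b) sup{Obj'(x,z) : x : {1,...,N} → [0,1] with Σ_{i=1}^N x(i) ≤ 1, z feasible for the exclusion set formulation (9) given x}; (c) sup{Obj(x,y) : x : {1,...,N} → {0,1} with Σ_{i=1}^N x(i) ≤ 1, y feasible for formulation (7) given x}. That is, under this cardinality constraint the linear programming relaxations of formulations (7) and (9) are equivalent and both are integral. -/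
/-!
Under the cardinality constraint both relaxations are dominated by the linear function
`x ↦ ∑ j, c j * x j`, where `c j` is the revenue of offering `j` alone. For (7) this follows from
`y k ℓ ≤ x (i k ℓ)`. For (9), grouping the pairs `(E, j) ∈ 𝓟` by the rankings that generate them
turns the objective into that of (7) at the increments `z(E_{k,ℓ}) - z(E_{k,ℓ-1})`, which are
bounded by `x (i k ℓ)` as well. On the simplex the linear function is maximised at the vertex
offering a best single product `j₀`, and this integral solution (with `y k ℓ = x (i k ℓ)`,
resp. `z E = 1[j₀ ∈ E]`) attains `c j₀` in all three problems.
-/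

namespace RankingChoice

open Finset

abbrev prefixSet (σ : ℕ → ℕ) (L : ℕ) : Finset ℕ := (Icc 1 L).image σ

section prefixSet

variable {σ : ℕ → ℕ} {n L ℓ : ℕ}

lemma prefixSet_succ (σ : ℕ → ℕ) (L : ℕ) :
    prefixSet σ (L + 1) = insert (σ (L + 1)) (prefixSet σ L) := by
  rw [prefixSet, prefixSet, ← insert_Icc_right_eq_Icc_add_one (by omega), image_insert]

lemma apply_mem_prefixSet (hℓ1 : 1 ≤ ℓ) (hℓL : ℓ ≤ L) : σ ℓ ∈ prefixSet σ L :=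
  mem_image_of_mem σ (mem_Icc.2 ⟨hℓ1, hℓL⟩)

lemma injOn_Icc_of_le (hσ : Set.InjOn σ (Set.Icc 1 n)) (hL : L ≤ n) :
    Set.InjOn σ (Icc 1 L : Finset ℕ) := by
  rw [coe_Icc]
  exact hσ.mono (Set.Icc_subset_Icc_right hL)

lemma card_prefixSet (hσ : Set.InjOn σ (Set.Icc 1 n)) (hL : L ≤ n) :
    (prefixSet σ L).card = L := by
  rw [card_image_of_injOn (injOn_Icc_of_le hσ hL), Nat.card_Icc, Nat.add_sub_cancel]

lemma sum_prefixSet (hσ : Set.InjOn σ (Set.Icc 1 n)) (hL : L ≤ n) (f : ℕ → ℝ) :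
    ∑ m ∈ prefixSet σ L, f m = ∑ ℓ ∈ Icc 1 L, f (σ ℓ) :=
  sum_image (injOn_Icc_of_le hσ hL)

lemma apply_succ_notMem_prefixSet (hσ : Set.InjOn σ (Set.Icc 1 n)) (hL : L + 1 ≤ n) :
    σ (L + 1) ∉ prefixSet σ L := by
  intro hmem
  obtain ⟨ℓ, hℓ, heq⟩ := mem_image.1 hmem
  rw [mem_Icc] at hℓ
  have := hσ ⟨hℓ.1, by omega⟩ ⟨by omega, hL⟩ heq
  omega

end prefixSet

structure IsRankingFamily (N K : ℕ) (i : ℕ → ℕ → ℕ) (Lk : ℕ → ℕ) : Prop where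
  bijOn : ∀ k, 1 ≤ k → k ≤ K → Set.BijOn (i k) (Set.Icc 1 (N + 1)) (Set.Icc 1 (N + 1))
  le : ∀ k, 1 ≤ k → k ≤ K → Lk k ≤ N
  noPurchase : ∀ k, 1 ≤ k → k ≤ K → i k (Lk k + 1) = N + 1

/-- The expected revenue of offering product `j` alone: customer type `k` buys it exactly when
it is ranked above the no-purchase option. -/
noncomputable def singletonRevenue (K : ℕ) (i : ℕ → ℕ → ℕ) (Lk : ℕ → ℕ) (r lam : ℕ → ℝ)
    (j : ℕ) : ℝ :=
  r j * ∑ k ∈ Icc 1 K, if j ∈ prefixSet (i k) (Lk k) then lam k else 0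

/-- `y_{k,ℓ} = z(E_{k,ℓ}) - z(E_{k,ℓ-1})`, where `prefixSet (i k) L` is the exclusion set
`E_{k,L}`. -/
def increments (i : ℕ → ℕ → ℕ) (z : Finset ℕ → ℝ) (k ℓ : ℕ) : ℝ :=
  z (insert (i k ℓ) (prefixSet (i k) (ℓ - 1))) - z (prefixSet (i k) (ℓ - 1))

lemma sum_mul_le_of_sum_le_one {ι : Type*} {s : Finset ι} {c x : ι → ℝ} {M : ℝ} (hM : 0 ≤ M)
    (hc : ∀ j ∈ s, c j ≤ M) (hx : ∀ j ∈ s, 0 ≤ x j) (hsum : ∑ j ∈ s, x j ≤ 1) :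
    ∑ j ∈ s, c j * x j ≤ M :=
  calc ∑ j ∈ s, c j * x j ≤ ∑ j ∈ s, M * x j :=
        sum_le_sum fun j hj => mul_le_mul_of_nonneg_right (hc j hj) (hx j hj)
    _ = M * ∑ j ∈ s, x j := (mul_sum ..).symm
    _ ≤ M := mul_le_of_le_one_right hM hsum

lemma single_one_mem_Icc {ι : Type*} [DecidableEq ι] (j m : ι) :
    0 ≤ (Pi.single j 1 : ι → ℝ) m ∧ (Pi.single j 1 : ι → ℝ) m ≤ 1 := by
  rw [Pi.single_apply]
  split_ifs <;> norm_num

lemma sum_pi_single_one {ι : Type*} [DecidableEq ι] {s : Finset ι} {j : ι} (hj : j ∈ s) :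
    ∑ m ∈ s, (Pi.single j 1 : ι → ℝ) m = 1 := by
  rw [sum_pi_single', if_pos hj]

variable {N K : ℕ} {i : ℕ → ℕ → ℕ} {Lk : ℕ → ℕ} {r lam : ℕ → ℝ}

lemma singletonRevenue_nonneg (hr : ∀ j, 1 ≤ j → j ≤ N → 0 ≤ r j)
    (hlam : ∀ k, 1 ≤ k → k ≤ K → 0 ≤ lam k) {j : ℕ} (hj : j ∈ Icc 1 N) :
    0 ≤ singletonRevenue K i Lk r lam j := by
  obtain ⟨hj1, hj2⟩ := mem_Icc.1 hj
  refine mul_nonneg (hr j hj1 hj2) (sum_nonneg fun k hk => ?_)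
  split_ifs
  · exact hlam k (mem_Icc.1 hk).1 (mem_Icc.1 hk).2
  · exact le_rfl

lemma objY_congr {y y' : ℕ → ℕ → ℝ}
    (h : ∀ k ℓ, 1 ≤ k → k ≤ K → 1 ≤ ℓ → ℓ ≤ Lk k → y k ℓ = y' k ℓ) :
    ObjY K i Lk r lam y = ObjY K i Lk r lam y' := by
  refine sum_congr rfl fun k hk => congrArg _ (sum_congr rfl fun ℓ hℓ => ?_)
  rw [mem_Icc] at hk hℓ
  rw [h k ℓ hk.1 hk.2 hℓ.1 hℓ.2]

lemma feas9_single (j : ℕ) :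
    Feas9 K i Lk (Pi.single j 1) (fun E => if j ∈ E then 1 else 0) := by
  refine ⟨fun E m _ => ?_, fun E m _ => ?_, fun E _ => ?_, if_neg (notMem_empty j)⟩ <;>
    simp only [Pi.single_apply, mem_insert] <;> split_ifs <;> grind

namespace IsRankingFamily

variable {k : ℕ}

lemma injOn (hw : IsRankingFamily N K i Lk) (hk1 : 1 ≤ k) (hk2 : k ≤ K) :
    Set.InjOn (i k) (Set.Icc 1 (N + 1)) :=
  (hw.bijOn k hk1 hk2).injOn

lemma le_succ (hw : IsRankingFamily N K i Lk) (hk1 : 1 ≤ k) (hk2 : k ≤ K) : Lk k ≤ N + 1 :=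
  (hw.le k hk1 hk2).trans N.le_succ

lemma apply_mem_Icc (hw : IsRankingFamily N K i Lk) (hk1 : 1 ≤ k) (hk2 : k ≤ K) {ℓ : ℕ}
    (hℓ1 : 1 ≤ ℓ) (hℓ2 : ℓ ≤ Lk k) : i k ℓ ∈ Icc 1 N := by
  have hLN := hw.le k hk1 hk2
  have hmaps := (hw.bijOn k hk1 hk2).mapsTo (show ℓ ∈ Set.Icc 1 (N + 1) from ⟨hℓ1, by omega⟩)
  have hne : i k ℓ ≠ N + 1 := fun h => by
    have := hw.injOn hk1 hk2 ⟨hℓ1, by omega⟩ ⟨by omega, by omega⟩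
      (h.trans (hw.noPurchase k hk1 hk2).symm)
    omega
  exact mem_Icc.2 ⟨hmaps.1, by have := hmaps.2; omega⟩

lemma prefixSet_subset (hw : IsRankingFamily N K i Lk) (hk1 : 1 ≤ k) (hk2 : k ≤ K) {L : ℕ}
    (hL : L ≤ Lk k) : prefixSet (i k) L ⊆ Icc 1 N := by
  intro m hm
  obtain ⟨ℓ, hℓ, rfl⟩ := mem_image.1 hm
  rw [mem_Icc] at hℓ
  exact hw.apply_mem_Icc hk1 hk2 hℓ.1 (hℓ.2.trans hL)

lemma insert_subset_of_isPair (hw : IsRankingFamily N K i Lk) {E : Finset ℕ} {j : ℕ}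
    (hp : IsPair K i Lk E j) : insert j E ⊆ Icc 1 N := by
  obtain ⟨k, hk1, hk2, L, hL, rfl, rfl⟩ := hp
  rw [← prefixSet_succ]
  exact hw.prefixSet_subset hk1 hk2 hL

lemma card_add_one_le_of_isPair (hw : IsRankingFamily N K i Lk) (hk1 : 1 ≤ k) (hk2 : k ≤ K)
    {E : Finset ℕ} {j : ℕ} (hp : IsPair K i Lk E j) (hE : prefixSet (i k) E.card = E)
    (hj : i k (E.card + 1) = j) : E.card + 1 ≤ Lk k := by
  by_contra! hlt
  have hmem : N + 1 ∈ insert j E := by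
    rw [← hE, ← hj, ← prefixSet_succ, ← hw.noPurchase k hk1 hk2]
    exact apply_mem_prefixSet (by omega) (by omega)
  simpa using hw.insert_subset_of_isPair hp hmem

lemma isPair_and_iff (hw : IsRankingFamily N K i Lk) (hk1 : 1 ≤ k) (hk2 : k ≤ K)
    {E : Finset ℕ} {j : ℕ} :
    (IsPair K i Lk E j ∧ prefixSet (i k) E.card = E ∧ i k (E.card + 1) = j) ↔
      ∃ ℓ ∈ Icc 1 (Lk k), (prefixSet (i k) (ℓ - 1), i k ℓ) = (E, j) := by
  constructor
  · rintro ⟨hp, hE, hj⟩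
    refine ⟨E.card + 1, mem_Icc.2 ⟨by omega, hw.card_add_one_le_of_isPair hk1 hk2 hp hE hj⟩, ?_⟩
    simp [hE, hj]
  · rintro ⟨ℓ, hℓ, hEj⟩
    obtain ⟨hℓ1, hℓ2⟩ := mem_Icc.1 hℓ
    obtain ⟨rfl, rfl⟩ := Prod.mk.inj hEj
    have hcard : (prefixSet (i k) (ℓ - 1)).card = ℓ - 1 :=
      card_prefixSet (hw.injOn hk1 hk2) (by have := hw.le k hk1 hk2; omega)
    have hsucc : ℓ - 1 + 1 = ℓ := Nat.sub_add_cancel hℓ1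
    exact ⟨⟨k, hk1, hk2, ℓ - 1, by omega, rfl, by rw [hsucc]⟩, by rw [hcard], by rw [hcard, hsucc]⟩

lemma finite_setOf_isPair (hw : IsRankingFamily N K i Lk) :
    {p : Finset ℕ × ℕ | IsPair K i Lk p.1 p.2}.Finite := by
  refine ((Icc 1 N).powerset ×ˢ Icc 1 N).finite_toSet.subset fun p hp => ?_
  have h := hw.insert_subset_of_isPair hp
  simp only [coe_product, Set.mem_prod, mem_coe, mem_powerset]
  exact ⟨(subset_insert _ _).trans h, h (mem_insert_self _ _)⟩

lemma finsum_isPair_lamEI_mul (hw : IsRankingFamily N K i Lk) (lam : ℕ → ℝ)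
    (g : Finset ℕ → ℕ → ℝ) :
    ∑ᶠ (p : Finset ℕ × ℕ) (_ : IsPair K i Lk p.1 p.2), lamEI K i lam p.1 p.2 * g p.1 p.2 =
      ∑ k ∈ Icc 1 K, lam k * ∑ ℓ ∈ Icc 1 (Lk k), g (prefixSet (i k) (ℓ - 1)) (i k ℓ) := by
  refine (finsum_mem_eq_finite_toFinset_sum _ hw.finite_setOf_isPair).trans ?_
  simp only [lamEI, sum_mul, ite_mul, zero_mul]
  rw [sum_comm]
  refine sum_congr rfl fun k hk => ?_
  obtain ⟨hk1, hk2⟩ := mem_Icc.1 hk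
  have hfilter : hw.finite_setOf_isPair.toFinset.filter
      (fun p => prefixSet (i k) p.1.card = p.1 ∧ i k (p.1.card + 1) = p.2) =
      (Icc 1 (Lk k)).image (fun ℓ => (prefixSet (i k) (ℓ - 1), i k ℓ)) := by
    ext ⟨E, j⟩
    simpa only [mem_filter, Set.Finite.mem_toFinset, Set.mem_ofPred_eq, mem_image, and_assoc]
      using hw.isPair_and_iff hk1 hk2
  rw [← sum_filter, ← mul_sum, hfilter, sum_image]
  intro a ha b hb hab
  obtain ⟨ha1, ha2⟩ := mem_Icc.1 ha
  obtain ⟨hb1, hb2⟩ := mem_Icc.1 hb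
  have hcard := congrArg (fun p : Finset ℕ × ℕ => p.1.card) hab
  simp only at hcard
  rw [card_prefixSet (hw.injOn hk1 hk2) (by have := hw.le k hk1 hk2; omega),
    card_prefixSet (hw.injOn hk1 hk2) (by have := hw.le k hk1 hk2; omega)] at hcard
  omega

lemma objZ_eq_objY_increments (hw : IsRankingFamily N K i Lk) (r lam : ℕ → ℝ)
    (z : Finset ℕ → ℝ) : ObjZ K i Lk r lam z = ObjY K i Lk r lam (increments i z) := by
  rw [ObjZ, ObjY]
  exact (finsum_congr fun p => finsum_congr fun _ => by ring).trans
    (hw.finsum_isPair_lamEI_mul lam fun E j => r j * (z (insert j E) - z E))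

lemma objY_mono (hw : IsRankingFamily N K i Lk) (hr : ∀ j, 1 ≤ j → j ≤ N → 0 ≤ r j)
    (hlam : ∀ k, 1 ≤ k → k ≤ K → 0 ≤ lam k) {y y' : ℕ → ℕ → ℝ}
    (h : ∀ k ℓ, 1 ≤ k → k ≤ K → 1 ≤ ℓ → ℓ ≤ Lk k → y k ℓ ≤ y' k ℓ) :
    ObjY K i Lk r lam y ≤ ObjY K i Lk r lam y' := by
  refine sum_le_sum fun k hk => ?_
  obtain ⟨hk1, hk2⟩ := mem_Icc.1 hk
  refine mul_le_mul_of_nonneg_left (sum_le_sum fun ℓ hℓ => ?_) (hlam k hk1 hk2)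
  obtain ⟨hℓ1, hℓ2⟩ := mem_Icc.1 hℓ
  obtain ⟨hj1, hj2⟩ := mem_Icc.1 (hw.apply_mem_Icc hk1 hk2 hℓ1 hℓ2)
  exact mul_le_mul_of_nonneg_left (h k ℓ hk1 hk2 hℓ1 hℓ2) (hr _ hj1 hj2)

lemma objY_comp_eq (hw : IsRankingFamily N K i Lk) (x : ℕ → ℝ) :
    ObjY K i Lk r lam (fun k ℓ => x (i k ℓ)) =
      ∑ j ∈ Icc 1 N, singletonRevenue K i Lk r lam j * x j := by
  have hk : ∀ k ∈ Icc 1 K, lam k * ∑ ℓ ∈ Icc 1 (Lk k), r (i k ℓ) * x (i k ℓ) =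
      ∑ j ∈ Icc 1 N, if j ∈ prefixSet (i k) (Lk k) then lam k * (r j * x j) else 0 := by
    intro k hk
    obtain ⟨hk1, hk2⟩ := mem_Icc.1 hk
    rw [sum_ite_mem, inter_eq_right.2 (hw.prefixSet_subset hk1 hk2 le_rfl), ← mul_sum,
      sum_prefixSet (hw.injOn hk1 hk2) (hw.le_succ hk1 hk2) fun j => r j * x j]
  rw [ObjY, sum_congr rfl hk, sum_comm]
  refine sum_congr rfl fun j _ => ?_
  rw [singletonRevenue, mul_right_comm, mul_sum]
  exact sum_congr rfl fun k _ => by split_ifs <;> ring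

lemma objY_le_singletonRevenue (hw : IsRankingFamily N K i Lk)
    (hr : ∀ j, 1 ≤ j → j ≤ N → 0 ≤ r j) (hlam : ∀ k, 1 ≤ k → k ≤ K → 0 ≤ lam k) {j : ℕ}
    (hj : j ∈ Icc 1 N)
    (hmax : ∀ m ∈ Icc 1 N, singletonRevenue K i Lk r lam m ≤ singletonRevenue K i Lk r lam j)
    {x : ℕ → ℝ} {y : ℕ → ℕ → ℝ} (hx : ∀ m, 1 ≤ m → m ≤ N → 0 ≤ x m)
    (hsum : ∑ m ∈ Icc 1 N, x m ≤ 1)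
    (hy : ∀ k ℓ, 1 ≤ k → k ≤ K → 1 ≤ ℓ → ℓ ≤ Lk k → y k ℓ ≤ x (i k ℓ)) :
    ObjY K i Lk r lam y ≤ singletonRevenue K i Lk r lam j :=
  calc ObjY K i Lk r lam y ≤ ObjY K i Lk r lam (fun k ℓ => x (i k ℓ)) := hw.objY_mono hr hlam hy
    _ = ∑ m ∈ Icc 1 N, singletonRevenue K i Lk r lam m * x m := hw.objY_comp_eq x
    _ ≤ singletonRevenue K i Lk r lam j :=
      sum_mul_le_of_sum_le_one (singletonRevenue_nonneg hr hlam hj) hmax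
        (fun m hm => hx m (mem_Icc.1 hm).1 (mem_Icc.1 hm).2) hsum

lemma feas7_single (hw : IsRankingFamily N K i Lk) (j : ℕ) :
    Feas7 K i Lk (Pi.single j 1) (fun k ℓ => (Pi.single j 1 : ℕ → ℝ) (i k ℓ)) := by
  have h0 : ∀ m, (0 : ℝ) ≤ (Pi.single j 1 : ℕ → ℝ) m := fun m => (single_one_mem_Icc j m).1
  refine ⟨fun k hk1 hk2 => ?_, fun k ℓ _ _ hℓ1 _ => ?_, fun k ℓ _ _ _ _ => ⟨h0 _, le_rfl⟩⟩
  · rw [← sum_prefixSet (hw.injOn hk1 hk2) (hw.le_succ hk1 hk2), sum_pi_single']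
    split_ifs <;> norm_num
  · exact single_le_sum (fun m _ => h0 _) (mem_Icc.2 ⟨hℓ1, le_rfl⟩)

lemma objY_single (hw : IsRankingFamily N K i Lk) {j : ℕ} (hj : j ∈ Icc 1 N) :
    ObjY K i Lk r lam (fun k ℓ => (Pi.single j 1 : ℕ → ℝ) (i k ℓ)) =
      singletonRevenue K i Lk r lam j := by
  simp_rw [hw.objY_comp_eq, Pi.single_apply, mul_ite, mul_one, mul_zero, sum_ite_eq', if_pos hj]

lemma objZ_single (hw : IsRankingFamily N K i Lk) {j : ℕ} (hj : j ∈ Icc 1 N) :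
    ObjZ K i Lk r lam (fun E => if j ∈ E then 1 else 0) = singletonRevenue K i Lk r lam j := by
  rw [hw.objZ_eq_objY_increments, ← hw.objY_single hj]
  refine objY_congr fun k ℓ hk1 hk2 hℓ1 hℓ2 => ?_
  have hsucc : ℓ - 1 + 1 = ℓ := Nat.sub_add_cancel hℓ1
  have hfresh : i k ℓ ∉ prefixSet (i k) (ℓ - 1) := by
    have := apply_succ_notMem_prefixSet (hw.injOn hk1 hk2) (L := ℓ - 1)
      (by have := hw.le k hk1 hk2; omega)
    rwa [hsucc] at this
  by_cases hjℓ : j = i k ℓ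
  · subst hjℓ
    simp [increments, hfresh]
  · simp only [increments, mem_insert, hjℓ, false_or, sub_self, Pi.single_apply, Ne.symm hjℓ,
      if_false]

section Optimum

variable {j₀ : ℕ}

lemma isGreatest_relaxation7 (hw : IsRankingFamily N K i Lk)
    (hr : ∀ j, 1 ≤ j → j ≤ N → 0 ≤ r j) (hlam : ∀ k, 1 ≤ k → k ≤ K → 0 ≤ lam k)
    (hj₀ : j₀ ∈ Icc 1 N)
    (hmax : ∀ m ∈ Icc 1 N, singletonRevenue K i Lk r lam m ≤ singletonRevenue K i Lk r lam j₀) :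
    IsGreatest {v : ℝ | ∃ x y, (∀ j, 1 ≤ j → j ≤ N → 0 ≤ x j ∧ x j ≤ 1) ∧
        (∑ j ∈ Finset.Icc 1 N, x j) ≤ 1 ∧
        Feas7 K i Lk x y ∧ ObjY K i Lk r lam y = v} (singletonRevenue K i Lk r lam j₀) := by
  refine ⟨⟨Pi.single j₀ 1, _, fun m _ _ => single_one_mem_Icc j₀ m,
    (sum_pi_single_one hj₀).le, hw.feas7_single j₀, hw.objY_single hj₀⟩, ?_⟩
  rintro v ⟨x, y, hx, hsum, hfeas, rfl⟩
  exact hw.objY_le_singletonRevenue hr hlam hj₀ hmax (fun m hm1 hm2 => (hx m hm1 hm2).1) hsum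
    fun k ℓ hk1 hk2 hℓ1 hℓ2 => (hfeas.2.2 k ℓ hk1 hk2 hℓ1 hℓ2).2

lemma isGreatest_relaxation9 (hw : IsRankingFamily N K i Lk)
    (hr : ∀ j, 1 ≤ j → j ≤ N → 0 ≤ r j) (hlam : ∀ k, 1 ≤ k → k ≤ K → 0 ≤ lam k)
    (hj₀ : j₀ ∈ Icc 1 N)
    (hmax : ∀ m ∈ Icc 1 N, singletonRevenue K i Lk r lam m ≤ singletonRevenue K i Lk r lam j₀) :
    IsGreatest {v : ℝ | ∃ x z, (∀ j, 1 ≤ j → j ≤ N → 0 ≤ x j ∧ x j ≤ 1) ∧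
        (∑ j ∈ Finset.Icc 1 N, x j) ≤ 1 ∧
        Feas9 K i Lk x z ∧ ObjZ K i Lk r lam z = v} (singletonRevenue K i Lk r lam j₀) := by
  refine ⟨⟨Pi.single j₀ 1, _, fun m _ _ => single_one_mem_Icc j₀ m,
    (sum_pi_single_one hj₀).le, feas9_single j₀, hw.objZ_single hj₀⟩, ?_⟩
  rintro v ⟨x, z, hx, hsum, hfeas, rfl⟩
  rw [hw.objZ_eq_objY_increments]
  exact hw.objY_le_singletonRevenue hr hlam hj₀ hmax (fun m hm1 hm2 => (hx m hm1 hm2).1) hsum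
    fun k ℓ hk1 hk2 hℓ1 hℓ2 =>
      (hfeas.1 _ _ ⟨k, hk1, hk2, ℓ - 1, by omega, rfl, by rw [Nat.sub_add_cancel hℓ1]⟩).2

lemma isGreatest_integral7 (hw : IsRankingFamily N K i Lk)
    (hr : ∀ j, 1 ≤ j → j ≤ N → 0 ≤ r j) (hlam : ∀ k, 1 ≤ k → k ≤ K → 0 ≤ lam k)
    (hj₀ : j₀ ∈ Icc 1 N)
    (hmax : ∀ m ∈ Icc 1 N, singletonRevenue K i Lk r lam m ≤ singletonRevenue K i Lk r lam j₀) :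
    IsGreatest {v : ℝ | ∃ x y, (∀ j, 1 ≤ j → j ≤ N → (x j = 0 ∨ x j = 1)) ∧
        (∑ j ∈ Finset.Icc 1 N, x j) ≤ 1 ∧
        Feas7 K i Lk x y ∧ ObjY K i Lk r lam y = v} (singletonRevenue K i Lk r lam j₀) := by
  refine ⟨⟨Pi.single j₀ 1, _, fun m _ _ => ?_, (sum_pi_single_one hj₀).le, hw.feas7_single j₀,
    hw.objY_single hj₀⟩, ?_⟩
  · rw [Pi.single_apply]
    split_ifs <;> simp
  rintro v ⟨x, y, hx, hsum, hfeas, rfl⟩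
  refine (hw.isGreatest_relaxation7 hr hlam hj₀ hmax).2 ⟨x, y, fun m hm1 hm2 => ?_, hsum, hfeas, rfl⟩
  rcases hx m hm1 hm2 with h | h <;> simp [h]

end Optimum

end IsRankingFamily

end RankingChoice

theorem stmt2_general
    (N K : ℕ) (hN : 1 ≤ N)
    (i : ℕ → ℕ → ℕ)
    (hbij : ∀ k, 1 ≤ k → k ≤ K →
      Set.BijOn (i k) (Set.Icc 1 (N + 1)) (Set.Icc 1 (N + 1)))
    (Lk : ℕ → ℕ)
    (hLk : ∀ k, 1 ≤ k → k ≤ K → 1 ≤ Lk k ∧ Lk k ≤ N)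
    (hLkdef : ∀ k, 1 ≤ k → k ≤ K → i k (Lk k + 1) = N + 1)
    (r : ℕ → ℝ) (hrpos : ∀ j, 1 ≤ j → j ≤ N → 0 < r j)
    (lam : ℕ → ℝ) (hlam : ∀ k, 1 ≤ k → k ≤ K → 0 ≤ lam k) :
    (sSup {v : ℝ | ∃ x y, (∀ j, 1 ≤ j → j ≤ N → 0 ≤ x j ∧ x j ≤ 1) ∧
        (∑ j ∈ Finset.Icc 1 N, x j) ≤ 1 ∧
        Feas7 K i Lk x y ∧ ObjY K i Lk r lam y = v} =
      sSup {v : ℝ | ∃ x z, (∀ j, 1 ≤ j → j ≤ N → 0 ≤ x j ∧ x j ≤ 1) ∧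
        (∑ j ∈ Finset.Icc 1 N, x j) ≤ 1 ∧
        Feas9 K i Lk x z ∧ ObjZ K i Lk r lam z = v}) ∧
    (sSup {v : ℝ | ∃ x z, (∀ j, 1 ≤ j → j ≤ N → 0 ≤ x j ∧ x j ≤ 1) ∧
        (∑ j ∈ Finset.Icc 1 N, x j) ≤ 1 ∧
        Feas9 K i Lk x z ∧ ObjZ K i Lk r lam z = v} =
      sSup {v : ℝ | ∃ x y, (∀ j, 1 ≤ j → j ≤ N → (x j = 0 ∨ x j = 1)) ∧
        (∑ j ∈ Finset.Icc 1 N, x j) ≤ 1 ∧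
        Feas7 K i Lk x y ∧ ObjY K i Lk r lam y = v}) := by
  have hw : RankingChoice.IsRankingFamily N K i Lk :=
    ⟨hbij, fun k hk1 hk2 => (hLk k hk1 hk2).2, hLkdef⟩
  have hr : ∀ j, 1 ≤ j → j ≤ N → 0 ≤ r j := fun j hj1 hj2 => (hrpos j hj1 hj2).le
  obtain ⟨j₀, hj₀, hmax⟩ := Finset.exists_max_image (Finset.Icc 1 N)
    (RankingChoice.singletonRevenue K i Lk r lam) ⟨1, Finset.mem_Icc.2 ⟨le_rfl, hN⟩⟩
  have h7 := (hw.isGreatest_relaxation7 hr hlam hj₀ hmax).csSup_eq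
  have h9 := (hw.isGreatest_relaxation9 hr hlam hj₀ hmax).csSup_eq
  have hint := (hw.isGreatest_integral7 hr hlam hj₀ hmax).csSup_eq
  exact ⟨h7.trans h9.symm, h9.trans hint.symm⟩

theorem stmt2
    (N K : ℕ) (hN : 1 ≤ N) (hK : 1 ≤ K)
    (i : ℕ → ℕ → ℕ)
    (hbij : ∀ k, 1 ≤ k → k ≤ K →
      Set.BijOn (i k) (Set.Icc 1 (N + 1)) (Set.Icc 1 (N + 1)))
    (Lk : ℕ → ℕ)
    (hLk : ∀ k, 1 ≤ k → k ≤ K → 1 ≤ Lk k ∧ Lk k ≤ N)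
    (hLkdef : ∀ k, 1 ≤ k → k ≤ K → i k (Lk k + 1) = N + 1)
    (r : ℕ → ℝ) (hrpos : ∀ j, 1 ≤ j → j ≤ N → 0 < r j) (hrN : r (N + 1) = 0)
    (lam : ℕ → ℝ) (hlam : ∀ k, 1 ≤ k → k ≤ K → 0 ≤ lam k)
    (hlamsum : ∑ k ∈ Finset.Icc 1 K, lam k = 1) :
    (sSup {v : ℝ | ∃ x y, (∀ j, 1 ≤ j → j ≤ N → 0 ≤ x j ∧ x j ≤ 1) ∧
        (∑ j ∈ Finset.Icc 1 N, x j) ≤ 1 ∧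
        Feas7 K i Lk x y ∧ ObjY K i Lk r lam y = v} =
      sSup {v : ℝ | ∃ x z, (∀ j, 1 ≤ j → j ≤ N → 0 ≤ x j ∧ x j ≤ 1) ∧
        (∑ j ∈ Finset.Icc 1 N, x j) ≤ 1 ∧
        Feas9 K i Lk x z ∧ ObjZ K i Lk r lam z = v}) ∧
    (sSup {v : ℝ | ∃ x z, (∀ j, 1 ≤ j → j ≤ N → 0 ≤ x j ∧ x j ≤ 1) ∧
        (∑ j ∈ Finset.Icc 1 N, x j) ≤ 1 ∧
        Feas9 K i Lk x z ∧ ObjZ K i Lk r lam z = v} =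
      sSup {v : ℝ | ∃ x y, (∀ j, 1 ≤ j → j ≤ N → (x j = 0 ∨ x j = 1)) ∧
        (∑ j ∈ Finset.Icc 1 N, x j) ≤ 1 ∧
        Feas7 K i Lk x y ∧ ObjY K i Lk r lam y = v}) :=
  stmt2_general N K hN i hbij Lk hLk hLkdef r hrpos lam hlam
end

section
/- For every δ ∈ Δ there exists (α,β,γ) ∈ D such that J(w,δ) = G(w,(α,β,γ)) for all w ∈ W. -/
/-! The dual certificate is read off `J` coefficient by coefficient: on positions `1, …, L` take
`α = (ρ - δ)⁺` and `β = δ(ℓ+1) - δ(ℓ)`, and let `β(L+1) = γ - δ(L+1)` absorb the constant, where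
`γ` dominates `δ(L+1)` and every revenue. Continuing `δ` by the constant `γ` past `L+1`, the tail
sums of `β` telescope to `γ - δ(ℓ)`, so the dual constraint at `ℓ` reduces to `ρ(ℓ) ≤ α(ℓ) + δ(ℓ)`,
which holds by the choice of `α`, by `ρ(L+1) = 0 ≤ δ(L+1)`, and by `ρ ≤ γ` beyond `L+1`. -/

open Finset

/-- The maximum revenue `r̄` among the positions `1, …, L+1`. -/
noncomputable def rbar (L : ℕ) (ρ : ℕ → ℝ) : ℝ :=
  (Finset.Icc 1 (L + 1)).sup' (Finset.nonempty_Icc.mpr (by omega)) ρ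

/-- Membership in `Δ = {δ ∈ ℝ^{L+1} : 0 ≤ δ 1 ≤ ⋯ ≤ δ (L+1) ≤ r̄}`. -/
def memDelta (L : ℕ) (ρ δ : ℕ → ℝ) : Prop :=
  0 ≤ δ 1 ∧ (∀ ℓ, 1 ≤ ℓ → ℓ ≤ L → δ ℓ ≤ δ (ℓ + 1)) ∧ δ (L + 1) ≤ rbar L ρ

/-- Membership in `W = {w ∈ ℝ^{N+1} : 0 ≤ w ℓ ≤ 1 for all ℓ, w (L+1) = 1}`. -/
def memW (N L : ℕ) (w : ℕ → ℝ) : Prop :=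
  (∀ ℓ, 1 ≤ ℓ → ℓ ≤ N + 1 → 0 ≤ w ℓ ∧ w ℓ ≤ 1) ∧ w (L + 1) = 1

/-- The objective `J(w, δ)`. -/
noncomputable def Jfun (L : ℕ) (ρ w δ : ℕ → ℝ) : ℝ :=
  δ (L + 1) + ∑ ℓ ∈ Finset.Icc 1 L, (max 0 (ρ ℓ - δ ℓ) - (δ (ℓ + 1) - δ ℓ)) * w ℓ

/-- Membership in the dual feasible set `D`. -/
def memD (N : ℕ) (ρ α β : ℕ → ℝ) (γ : ℝ) : Prop :=
  (∀ ℓ, 1 ≤ ℓ → ℓ ≤ N + 1 → 0 ≤ α ℓ ∧ 0 ≤ β ℓ) ∧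
  (∀ ℓ, 1 ≤ ℓ → ℓ ≤ N + 1 → ρ ℓ ≤ γ + α ℓ - ∑ ℓ' ∈ Finset.Icc ℓ (N + 1), β ℓ')

/-- The objective `G(w, (α, β, γ))`. -/
noncomputable def Gfun (N : ℕ) (w α β : ℕ → ℝ) (γ : ℝ) : ℝ :=
  γ + ∑ ℓ ∈ Finset.Icc 1 (N + 1), (α ℓ - β ℓ) * w ℓ

section DualCertificate

variable (L : ℕ) (ρ δ : ℕ → ℝ) (γ : ℝ)

noncomputable def dualAlpha (ℓ : ℕ) : ℝ :=
  if ℓ ∈ Icc 1 L then max 0 (ρ ℓ - δ ℓ) else 0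

def extendConst (ℓ : ℕ) : ℝ :=
  if ℓ ≤ L + 1 then δ ℓ else γ

def dualBeta (ℓ : ℕ) : ℝ :=
  if ℓ ∈ Icc 1 (L + 1) then extendConst L δ γ (ℓ + 1) - extendConst L δ γ ℓ else 0

variable {L ρ δ γ} {N : ℕ} {w : ℕ → ℝ}

theorem extendConst_of_le {ℓ : ℕ} (h : ℓ ≤ L + 1) : extendConst L δ γ ℓ = δ ℓ := if_pos h

theorem extendConst_of_lt {ℓ : ℕ} (h : L + 1 < ℓ) : extendConst L δ γ ℓ = γ := if_neg (by omega)

theorem sum_dualBeta_Icc (hLN : L ≤ N) {ℓ : ℕ} (hℓ : 1 ≤ ℓ) :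
    ∑ i ∈ Icc ℓ (N + 1), dualBeta L δ γ i = γ - extendConst L δ γ ℓ := by
  have hinter : Icc ℓ (N + 1) ∩ Icc 1 (L + 1) = Ico ℓ (L + 2) := by
    ext i; simp only [mem_inter, mem_Icc, mem_Ico]; omega
  simp only [dualBeta]
  rw [sum_ite_mem, hinter]
  rcases le_or_gt ℓ (L + 2) with h | h
  · rw [sum_Ico_sub _ h, extendConst_of_lt (by omega)]
  · rw [Ico_eq_empty_of_le h.le, sum_empty, extendConst_of_lt (by omega), sub_self]

theorem dualBeta_nonneg (hmono : ∀ ℓ, 1 ≤ ℓ → ℓ ≤ L → δ ℓ ≤ δ (ℓ + 1)) (hγ : δ (L + 1) ≤ γ)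
    (ℓ : ℕ) : 0 ≤ dualBeta L δ γ ℓ := by
  unfold dualBeta
  split_ifs with h
  · rw [mem_Icc] at h
    rcases h.2.lt_or_eq with hlt | rfl
    · rw [extendConst_of_le (by omega), extendConst_of_le h.2]
      linarith [hmono ℓ h.1 (by omega)]
    · rw [extendConst_of_lt (by omega), extendConst_of_le le_rfl]
      linarith
  · rfl

theorem memD_dual (hLN : L ≤ N) (hρ0 : ρ (L + 1) = 0) (hδ : 0 ≤ δ (L + 1))
    (hmono : ∀ ℓ, 1 ≤ ℓ → ℓ ≤ L → δ ℓ ≤ δ (ℓ + 1)) (hγδ : δ (L + 1) ≤ γ)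
    (hγρ : ∀ ℓ, 1 ≤ ℓ → ℓ ≤ N + 1 → ρ ℓ ≤ γ) :
    memD N ρ (dualAlpha L ρ δ) (dualBeta L δ γ) γ := by
  refine ⟨fun ℓ _ _ => ⟨?_, dualBeta_nonneg hmono hγδ ℓ⟩, fun ℓ h₁ h₂ => ?_⟩
  · unfold dualAlpha
    split_ifs
    exacts [le_max_left _ _, le_rfl]
  · suffices ρ ℓ ≤ dualAlpha L ρ δ ℓ + extendConst L δ γ ℓ by
      rw [sum_dualBeta_Icc hLN h₁]; linarith
    unfold dualAlpha
    rcases lt_trichotomy ℓ (L + 1) with h | rfl | h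
    · rw [if_pos (mem_Icc.mpr ⟨h₁, by omega⟩), extendConst_of_le h.le]
      linarith [le_max_right 0 (ρ ℓ - δ ℓ)]
    · rw [if_neg (by simp), extendConst_of_le le_rfl, hρ0, zero_add]
      exact hδ
    · rw [if_neg (by simp only [mem_Icc]; omega), extendConst_of_lt h, zero_add]
      exact hγρ ℓ h₁ h₂

theorem Gfun_dual_eq_Jfun (hLN : L ≤ N) (hw : w (L + 1) = 1) :
    Gfun N w (dualAlpha L ρ δ) (dualBeta L δ γ) γ = Jfun L ρ w δ := by
  have hIcc : ∀ K, K ≤ N + 1 → Icc 1 (N + 1) ∩ Icc 1 K = Icc 1 K := fun K hK =>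
    inter_eq_right.mpr (Icc_subset_Icc_right hK)
  have hα : ∑ i ∈ Icc 1 (N + 1), dualAlpha L ρ δ i * w i
      = ∑ i ∈ Icc 1 L, max 0 (ρ i - δ i) * w i := by
    simp only [dualAlpha, ite_mul, zero_mul]
    rw [sum_ite_mem, hIcc L (by omega)]
  have hβ : ∑ i ∈ Icc 1 (N + 1), dualBeta L δ γ i * w i
      = ∑ i ∈ Icc 1 L, (δ (i + 1) - δ i) * w i + (γ - δ (L + 1)) := by
    simp only [dualBeta, ite_mul, zero_mul]
    rw [sum_ite_mem, hIcc (L + 1) (by omega), sum_Icc_succ_top (by omega), hw]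
    congr 1
    · refine sum_congr rfl fun i hi => ?_
      simp only [mem_Icc] at hi
      rw [extendConst_of_le (by omega), extendConst_of_le (by omega)]
    · rw [extendConst_of_lt (by omega), extendConst_of_le le_rfl, mul_one]
  rw [Gfun, Jfun]
  simp only [sub_mul, sum_sub_distrib] at hβ ⊢
  linarith

end DualCertificate

theorem stmt3_general
    (N L : ℕ) (hLN : L ≤ N)
    (ρ : ℕ → ℝ)
    (hρ0 : ρ (L + 1) = 0)
    (δ : ℕ → ℝ) (hδ : memDelta L ρ δ) :
    ∃ α β γ, memD N ρ α β γ ∧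
      ∀ w, memW N L w → Jfun L ρ w δ = Gfun N w α β γ := by
  obtain ⟨hδ1, hmono, -⟩ := hδ
  have hδL : 0 ≤ δ (L + 1) := by
    have hsteps : 0 ≤ ∑ i ∈ Ico 1 (L + 1), (δ (i + 1) - δ i) := sum_nonneg fun i hi => by
      simp only [mem_Ico] at hi
      linarith [hmono i hi.1 (by omega)]
    rw [sum_Ico_sub _ (by omega)] at hsteps
    linarith
  obtain ⟨γ, hγ⟩ := (insert (δ (L + 1)) ((Icc 1 (N + 1)).image ρ)).exists_le
  refine ⟨dualAlpha L ρ δ, dualBeta L δ γ, γ,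
    memD_dual hLN hρ0 hδL hmono (hγ _ (mem_insert_self _ _)) fun ℓ h₁ h₂ => ?_,
    fun w hw => (Gfun_dual_eq_Jfun hLN hw.2).symm⟩
  exact hγ _ (mem_insert_of_mem (mem_image_of_mem ρ (mem_Icc.mpr ⟨h₁, h₂⟩)))

theorem stmt3
    (N L : ℕ) (hL1 : 1 ≤ L) (hLN : L ≤ N)
    (ρ : ℕ → ℝ)
    (hρpos : ∀ ℓ, 1 ≤ ℓ → ℓ ≤ N + 1 → ℓ ≠ L + 1 → 0 < ρ ℓ)
    (hρ0 : ρ (L + 1) = 0)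
    (δ : ℕ → ℝ) (hδ : memDelta L ρ δ) :
    ∃ α β γ, memD N ρ α β γ ∧
      ∀ w, memW N L w → Jfun L ρ w δ = Gfun N w α β γ :=
  stmt3_general N L hLN ρ hρ0 δ hδ
end

section
/- For every (α,β,γ) ∈ D there exists δ ∈ Δ such that J(w,δ) ≤ G(w,(α,β,γ)) for all w ∈ W. -/
/-!
Take for `δ` the clamp to `[0, r̄]` of the dual threshold `P ℓ = γ - ∑_{ℓ' ≥ ℓ} β ℓ'`, which is
nondecreasing since `β ≥ 0`. Both objectives are affine in `w`. In `G`, the positions `ℓ ≥ L + 1`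
contribute at least `α (L+1) - ∑_{ℓ' ≥ L+1} β ℓ' ≥ max 0 (P (L+1))`, by dual feasibility at the
no-purchase position. For `1 ≤ ℓ ≤ L`, dual feasibility `ρ ℓ ≤ P (ℓ+1) + α ℓ - β ℓ` shows that the
`ℓ`-th term of `J` exceeds `(α ℓ - β ℓ) w ℓ` by at most the increment of the excess
`max 0 (P ℓ - r̄)`; these increments telescope, and the clamped part plus the excess at `L + 1` is
`max 0 (P (L+1))`.
-/

open Finset

section Scalar

variable {p p' a r b c t w : ℝ}

lemma clamp_add_excess (hb : 0 ≤ b) : min (max 0 p) b + max 0 (p - b) = max 0 p := by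
  simp only [min_def, max_def]
  split_ifs <;> linarith

lemma clamp_step (hr0 : 0 ≤ r) (hrb : r ≤ b) (hp : p ≤ p' + a) (hr : r ≤ p' + a) :
    max 0 (r - min (max 0 p) b) - (min (max 0 p') b - min (max 0 p) b)
      ≤ max 0 (p' - b) - max 0 (p - b) + a := by
  simp only [min_def, max_def]
  split_ifs <;> linarith

lemma mul_le_add_mul_of_le_add (hc : c ≤ t + a) (ht : 0 ≤ t) (hw0 : 0 ≤ w) (hw1 : w ≤ 1) :
    c * w ≤ t + a * w := by
  nlinarith

end Scalar

lemma Finset.sum_Icc_consecutive {M : Type*} [AddCommMonoid M] (f : ℕ → M) {m n k : ℕ}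
    (hmn : m ≤ n + 1) (hnk : n ≤ k) :
    ∑ i ∈ Icc m k, f i = ∑ i ∈ Icc m n, f i + ∑ i ∈ Icc (n + 1) k, f i := by
  simp only [← Finset.Ico_add_one_right_eq_Icc]
  exact (sum_Ico_consecutive f hmn (by omega)).symm

lemma Finset.sum_Icc_sub_of_le_succ {G : Type*} [AddCommGroup G] (f : ℕ → G) {m n : ℕ}
    (h : m ≤ n + 1) : ∑ i ∈ Icc m n, (f (i + 1) - f i) = f (n + 1) - f m := by
  rw [← Finset.Ico_add_one_right_eq_Icc, sum_Ico_sub f h]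

noncomputable def dualThreshold (N : ℕ) (β : ℕ → ℝ) (γ : ℝ) (ℓ : ℕ) : ℝ :=
  γ - ∑ ℓ' ∈ Icc ℓ (N + 1), β ℓ'

noncomputable def clampedThreshold (N L : ℕ) (ρ β : ℕ → ℝ) (γ : ℝ) (ℓ : ℕ) : ℝ :=
  min (max 0 (dualThreshold N β γ ℓ)) (rbar L ρ)

section Dual

variable {N L ℓ : ℕ} {ρ α β w : ℕ → ℝ} {γ : ℝ}

lemma le_rbar (h1 : 1 ≤ ℓ) (h2 : ℓ ≤ L + 1) : ρ ℓ ≤ rbar L ρ :=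
  le_sup' ρ (mem_Icc.mpr ⟨h1, h2⟩)

lemma rbar_nonneg (hρ0 : ρ (L + 1) = 0) : 0 ≤ rbar L ρ :=
  hρ0 ▸ le_rbar (by omega) le_rfl

lemma dualThreshold_succ (h : ℓ ≤ N + 1) :
    dualThreshold N β γ (ℓ + 1) = dualThreshold N β γ ℓ + β ℓ := by
  rw [dualThreshold, dualThreshold, ← insert_Icc_add_one_left_eq_Icc h, sum_insert (by simp)]
  ring

lemma memD.le_dualThreshold_add (hD : memD N ρ α β γ) (h1 : 1 ≤ ℓ) (h2 : ℓ ≤ N + 1) :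
    ρ ℓ ≤ dualThreshold N β γ ℓ + α ℓ := by
  have := hD.2 ℓ h1 h2
  rw [dualThreshold]
  linarith

lemma memD.dualThreshold_le_succ (hD : memD N ρ α β γ) (h1 : 1 ≤ ℓ) (h2 : ℓ ≤ N + 1) :
    dualThreshold N β γ ℓ ≤ dualThreshold N β γ (ℓ + 1) := by
  rw [dualThreshold_succ h2]
  linarith [(hD.1 ℓ h1 h2).2]

lemma memDelta_clampedThreshold (hLN : L ≤ N) (hρ0 : ρ (L + 1) = 0) (hD : memD N ρ α β γ) :
    memDelta L ρ (clampedThreshold N L ρ β γ) := by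
  refine ⟨le_min (le_max_left _ _) (rbar_nonneg hρ0), fun ℓ h1 h2 => ?_, min_le_right _ _⟩
  unfold clampedThreshold
  gcongr
  exact hD.dualThreshold_le_succ h1 (by omega)

lemma Jfun_clampedThreshold_le (hLN : L ≤ N) (hρ0 : ρ (L + 1) = 0)
    (hρ : ∀ ℓ, 1 ≤ ℓ → ℓ ≤ L → 0 ≤ ρ ℓ) (hD : memD N ρ α β γ) (hw : memW N L w) :
    Jfun L ρ w (clampedThreshold N L ρ β γ)
      ≤ max 0 (dualThreshold N β γ (L + 1)) + ∑ ℓ ∈ Icc 1 L, (α ℓ - β ℓ) * w ℓ := by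
  set P := dualThreshold N β γ
  set rb := rbar L ρ
  set excess : ℕ → ℝ := fun ℓ => max 0 (P ℓ - rb)
  have hterm : ∀ ℓ ∈ Icc 1 L,
      (max 0 (ρ ℓ - min (max 0 (P ℓ)) rb) - (min (max 0 (P (ℓ + 1))) rb - min (max 0 (P ℓ)) rb))
        * w ℓ ≤ (excess (ℓ + 1) - excess ℓ) + (α ℓ - β ℓ) * w ℓ := by
    intro ℓ hℓ
    obtain ⟨h1, h2⟩ := mem_Icc.mp hℓ
    have hsucc := dualThreshold_succ (β := β) (γ := γ) (show ℓ ≤ N + 1 by omega)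
    have hα := (hD.1 ℓ h1 (by omega)).1
    refine mul_le_add_mul_of_le_add ?_ ?_ (hw.1 ℓ h1 (by omega)).1 (hw.1 ℓ h1 (by omega)).2
    · refine clamp_step (hρ ℓ h1 h2) (le_rbar h1 (by omega)) (by linarith) ?_
      linarith [hD.le_dualThreshold_add h1 (show ℓ ≤ N + 1 by omega)]
    · have := hD.dualThreshold_le_succ h1 (show ℓ ≤ N + 1 by omega)
      simp only [excess, sub_nonneg]
      gcongr
  have hclamp : min (max 0 (P (L + 1))) rb + excess (L + 1) = max 0 (P (L + 1)) :=
    clamp_add_excess (rbar_nonneg hρ0)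
  calc Jfun L ρ w (clampedThreshold N L ρ β γ)
      ≤ min (max 0 (P (L + 1))) rb
          + ∑ ℓ ∈ Icc 1 L, ((excess (ℓ + 1) - excess ℓ) + (α ℓ - β ℓ) * w ℓ) :=
        add_le_add le_rfl (sum_le_sum hterm)
    _ = max 0 (P (L + 1)) - excess 1 + ∑ ℓ ∈ Icc 1 L, (α ℓ - β ℓ) * w ℓ := by
        rw [sum_add_distrib, sum_Icc_sub_of_le_succ excess (by omega)]
        linarith
    _ ≤ max 0 (P (L + 1)) + ∑ ℓ ∈ Icc 1 L, (α ℓ - β ℓ) * w ℓ := by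
        linarith [le_max_left 0 (P 1 - rb)]

lemma le_Gfun (hLN : L ≤ N) (hρ0 : ρ (L + 1) = 0) (hD : memD N ρ α β γ) (hw : memW N L w) :
    max 0 (dualThreshold N β γ (L + 1)) + ∑ ℓ ∈ Icc 1 L, (α ℓ - β ℓ) * w ℓ
      ≤ Gfun N w α β γ := by
  have hL : L + 1 ∈ Icc (L + 1) (N + 1) := mem_Icc.mpr ⟨le_rfl, by omega⟩
  have htail : α (L + 1) - ∑ ℓ ∈ Icc (L + 1) (N + 1), β ℓ
      ≤ ∑ ℓ ∈ Icc (L + 1) (N + 1), (α ℓ - β ℓ) * w ℓ := by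
    have hαβ : ∀ ℓ ∈ Icc (L + 1) (N + 1), 0 ≤ α ℓ ∧ 0 ≤ β ℓ := fun ℓ hℓ =>
      hD.1 ℓ (by have := mem_Icc.mp hℓ; omega) (mem_Icc.mp hℓ).2
    have hw' : ∀ ℓ ∈ Icc (L + 1) (N + 1), 0 ≤ w ℓ ∧ w ℓ ≤ 1 := fun ℓ hℓ =>
      hw.1 ℓ (by have := mem_Icc.mp hℓ; omega) (mem_Icc.mp hℓ).2
    have hα : α (L + 1) ≤ ∑ ℓ ∈ Icc (L + 1) (N + 1), α ℓ * w ℓ := by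
      simpa [hw.2] using single_le_sum (fun ℓ hℓ => mul_nonneg (hαβ ℓ hℓ).1 (hw' ℓ hℓ).1) hL
    have hβ : ∑ ℓ ∈ Icc (L + 1) (N + 1), β ℓ * w ℓ ≤ ∑ ℓ ∈ Icc (L + 1) (N + 1), β ℓ :=
      sum_le_sum fun ℓ hℓ => mul_le_of_le_one_right (hαβ ℓ hℓ).2 (hw' ℓ hℓ).2
    simp only [sub_mul, sum_sub_distrib]
    linarith
  have hpos := hD.le_dualThreshold_add (show 1 ≤ L + 1 by omega) (show L + 1 ≤ N + 1 by omega)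
  rw [hρ0] at hpos
  have hmax : max 0 (dualThreshold N β γ (L + 1)) ≤ dualThreshold N β γ (L + 1) + α (L + 1) :=
    max_le hpos (by linarith [(hD.1 (L + 1) (by omega) (by omega)).1])
  rw [Gfun, sum_Icc_consecutive _ (by omega) (by omega : L ≤ N + 1)]
  unfold dualThreshold at hmax ⊢
  linarith

end Dual

theorem stmt4_general
    (N L : ℕ) (hLN : L ≤ N)
    (ρ : ℕ → ℝ)
    (hρpos : ∀ ℓ, 1 ≤ ℓ → ℓ ≤ N + 1 → ℓ ≠ L + 1 → 0 < ρ ℓ)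
    (hρ0 : ρ (L + 1) = 0)
    (α β : ℕ → ℝ) (γ : ℝ) (hD : memD N ρ α β γ) :
    ∃ δ, memDelta L ρ δ ∧
      ∀ w, memW N L w → Jfun L ρ w δ ≤ Gfun N w α β γ := by
  have hρ : ∀ ℓ, 1 ≤ ℓ → ℓ ≤ L → 0 ≤ ρ ℓ := fun ℓ h1 h2 =>
    (hρpos ℓ h1 (by omega) (by omega)).le
  exact ⟨clampedThreshold N L ρ β γ, memDelta_clampedThreshold hLN hρ0 hD, fun w hw =>
    (Jfun_clampedThreshold_le hLN hρ0 hρ hD hw).trans (le_Gfun hLN hρ0 hD hw)⟩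

theorem stmt4
    (N L : ℕ) (hL1 : 1 ≤ L) (hLN : L ≤ N)
    (ρ : ℕ → ℝ)
    (hρpos : ∀ ℓ, 1 ≤ ℓ → ℓ ≤ N + 1 → ℓ ≠ L + 1 → 0 < ρ ℓ)
    (hρ0 : ρ (L + 1) = 0)
    (α β : ℕ → ℝ) (γ : ℝ) (hD : memD N ρ α β γ) :
    ∃ δ, memDelta L ρ δ ∧
      ∀ w, memW N L w → Jfun L ρ w δ ≤ Gfun N w α β γ :=
  stmt4_general N L hLN ρ hρpos hρ0 α β γ hD
end

section
/- Let δ ∈ Δ, let r̄* := max_{1≤ℓ≤N+1} ρ(ℓ), and define α, β ∈ ℝ^{N+1} and γ ∈ ℝ by: α(ℓ) := max{0, ρ(ℓ) − δ(ℓ)} for ℓ ∈ {1,...,L+1} and α(ℓ) := 0 for ℓ ∈ {L+2,...,N+1}; β(ℓ) := δ(ℓ+1) − δ(ℓ) for ℓ ∈ {1,...,L}, β(L+1) := r̄* − δ(L+1), and β(ℓ) := 0 for ℓ ∈ {L+2,...,N+1}; and γ := r̄*. Then (α,β,γ) ∈ D and J(w,δ) = G(w,(α,β,γ)) for all w ∈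 W. -/
/-!
The tail sums of `β` telescope: `∑_{ℓ' ≥ ℓ} β ℓ' = r̄* - δ ℓ` for `ℓ ≤ L + 1`, so the constraint of
`D` at such `ℓ` reduces to `ρ ℓ - δ ℓ ≤ α ℓ`, and beyond `L + 1` it reduces to `ρ ℓ ≤ r̄*`.
Since `δ` is nonnegative and `ρ (L + 1) = 0` we get `α (L + 1) = 0`, so with `w (L + 1) = 1` the
summand of `G` at `L + 1` is `δ (L + 1) - r̄*`, which turns `γ = r̄*` into the leading `δ (L + 1)`
of `J`; the remaining summands agree term by term.
-/

open Finset

/-- The maximum revenue `r̄*` among all positions `1, …, N+1`. -/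
noncomputable def rmax (N : ℕ) (ρ : ℕ → ℝ) : ℝ :=
  (Finset.Icc 1 (N + 1)).sup' (Finset.nonempty_Icc.mpr (by omega)) ρ

lemma Finset.sum_Icc_eq_sum_Icc_of_eq_zero {M : Type*} [AddCommMonoid M] {f : ℕ → M}
    {a m n : ℕ} (hmn : m ≤ n) (hf : ∀ i, m < i → i ≤ n → f i = 0) :
    ∑ i ∈ Icc a n, f i = ∑ i ∈ Icc a m, f i := by
  refine (sum_subset (Icc_subset_Icc_right hmn) fun i hi hi' => ?_).symm
  simp only [mem_Icc, not_and, not_le] at hi hi'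
  exact hf i (hi' hi.1) hi.2

section DualCertificate

variable {N L : ℕ} {ρ δ α β w : ℕ → ℝ}

lemma rbar_le_rmax (hLN : L ≤ N) : rbar L ρ ≤ rmax N ρ :=
  sup'_mono ρ (Icc_subset_Icc_right (by omega)) _

lemma le_rmax {ℓ : ℕ} (h1 : 1 ≤ ℓ) (h2 : ℓ ≤ N + 1) : ρ ℓ ≤ rmax N ρ :=
  le_sup' ρ (mem_Icc.mpr ⟨h1, h2⟩)

lemma memDelta.le_last (hδ : memDelta L ρ δ) {ℓ : ℕ} (h1 : 1 ≤ ℓ) (h2 : ℓ ≤ L + 1) :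
    δ ℓ ≤ δ (L + 1) := by
  have hinc : 0 ≤ ∑ i ∈ Ico ℓ (L + 1), (δ (i + 1) - δ i) :=
    sum_nonneg fun i hi => by
      rw [mem_Ico] at hi
      linarith [hδ.2.1 i (by omega) (by omega)]
  rw [sum_Ico_sub δ h2] at hinc
  linarith

lemma memDelta.nonneg_last (hδ : memDelta L ρ δ) : 0 ≤ δ (L + 1) :=
  hδ.1.trans (hδ.le_last le_rfl (by omega))

lemma sum_Icc_eq_sub_of_increments {c : ℝ} (hLN : L ≤ N)
    (hβ1 : ∀ ℓ, 1 ≤ ℓ → ℓ ≤ L → β ℓ = δ (ℓ + 1) - δ ℓ)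
    (hβ2 : β (L + 1) = c - δ (L + 1))
    (hβ3 : ∀ ℓ, L + 2 ≤ ℓ → ℓ ≤ N + 1 → β ℓ = 0)
    {ℓ : ℕ} (h1 : 1 ≤ ℓ) (h2 : ℓ ≤ L + 1) :
    ∑ ℓ' ∈ Icc ℓ (N + 1), β ℓ' = c - δ ℓ := by
  have hincr : ∑ ℓ' ∈ Ico ℓ (L + 1), β ℓ' = ∑ ℓ' ∈ Ico ℓ (L + 1), (δ (ℓ' + 1) - δ ℓ') :=
    sum_congr rfl fun i hi => by
      rw [mem_Ico] at hi
      exact hβ1 i (by omega) (by omega)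
  rw [sum_Icc_eq_sum_Icc_of_eq_zero (by omega : L + 1 ≤ N + 1) hβ3,
    ← Ico_add_one_right_eq_Icc, sum_Ico_succ_top h2, hincr, sum_Ico_sub δ h2, hβ2]
  ring

lemma memD_rmax (hLN : L ≤ N) (hδ : memDelta L ρ δ)
    (hα1 : ∀ ℓ, 1 ≤ ℓ → ℓ ≤ L + 1 → α ℓ = max 0 (ρ ℓ - δ ℓ))
    (hα2 : ∀ ℓ, L + 2 ≤ ℓ → ℓ ≤ N + 1 → α ℓ = 0)
    (hβ1 : ∀ ℓ, 1 ≤ ℓ → ℓ ≤ L → β ℓ = δ (ℓ + 1) - δ ℓ)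
    (hβ2 : β (L + 1) = rmax N ρ - δ (L + 1))
    (hβ3 : ∀ ℓ, L + 2 ≤ ℓ → ℓ ≤ N + 1 → β ℓ = 0) :
    memD N ρ α β (rmax N ρ) := by
  refine ⟨fun ℓ h1 h2 => ⟨?_, ?_⟩, fun ℓ h1 h2 => ?_⟩
  · rcases le_or_gt ℓ (L + 1) with h | h
    · exact (hα1 ℓ h1 h).symm ▸ le_max_left _ _
    · exact (hα2 ℓ h h2).ge
  · rcases lt_trichotomy ℓ (L + 1) with h | rfl | h
    · rw [hβ1 ℓ h1 (by omega), sub_nonneg]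
      exact hδ.2.1 ℓ h1 (by omega)
    · rw [hβ2, sub_nonneg]
      exact hδ.2.2.trans (rbar_le_rmax hLN)
    · exact (hβ3 ℓ h h2).ge
  · rcases le_or_gt ℓ (L + 1) with h | h
    · rw [sum_Icc_eq_sub_of_increments hLN hβ1 hβ2 hβ3 h1 h, hα1 ℓ h1 h]
      linarith [le_max_right 0 (ρ ℓ - δ ℓ)]
    · have htail : ∑ ℓ' ∈ Icc ℓ (N + 1), β ℓ' = 0 :=
        sum_eq_zero fun i hi => by
          rw [mem_Icc] at hi
          exact hβ3 i (by omega) hi.2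
      rw [htail, hα2 ℓ h h2]
      linarith [le_rmax (ρ := ρ) h1 h2]

lemma Jfun_eq_Gfun (hLN : L ≤ N)
    (hα1 : ∀ ℓ, 1 ≤ ℓ → ℓ ≤ L → α ℓ = max 0 (ρ ℓ - δ ℓ))
    (hα2 : ∀ ℓ, L + 2 ≤ ℓ → ℓ ≤ N + 1 → α ℓ = 0)
    (hαL : α (L + 1) = 0)
    (hβ1 : ∀ ℓ, 1 ≤ ℓ → ℓ ≤ L → β ℓ = δ (ℓ + 1) - δ ℓ)
    (hβ3 : ∀ ℓ, L + 2 ≤ ℓ → ℓ ≤ N + 1 → β ℓ = 0)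
    (hw : w (L + 1) = 1) :
    Jfun L ρ w δ = Gfun N w α β (β (L + 1) + δ (L + 1)) := by
  have hterms : ∑ ℓ ∈ Icc 1 L, (α ℓ - β ℓ) * w ℓ
      = ∑ ℓ ∈ Icc 1 L, (max 0 (ρ ℓ - δ ℓ) - (δ (ℓ + 1) - δ ℓ)) * w ℓ :=
    sum_congr rfl fun i hi => by
      rw [mem_Icc] at hi
      rw [hα1 i hi.1 hi.2, hβ1 i hi.1 hi.2]
  rw [Jfun, Gfun, sum_Icc_eq_sum_Icc_of_eq_zero (by omega : L + 1 ≤ N + 1)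
      (fun i hi hi' => by rw [hα2 i hi hi', hβ3 i hi hi', sub_zero, zero_mul]),
    sum_Icc_succ_top (by omega), hterms, hαL, hw]
  ring

end DualCertificate

theorem stmt6_general
    (N L : ℕ) (hLN : L ≤ N)
    (ρ : ℕ → ℝ)
    (hρ0 : ρ (L + 1) = 0)
    (δ : ℕ → ℝ) (hδ : memDelta L ρ δ)
    (α β : ℕ → ℝ) (γ : ℝ)
    (hα1 : ∀ ℓ, 1 ≤ ℓ → ℓ ≤ L + 1 → α ℓ = max 0 (ρ ℓ - δ ℓ))
    (hα2 : ∀ ℓ, L + 2 ≤ ℓ → ℓ ≤ N + 1 → α ℓ = 0)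
    (hβ1 : ∀ ℓ, 1 ≤ ℓ → ℓ ≤ L → β ℓ = δ (ℓ + 1) - δ ℓ)
    (hβ2 : β (L + 1) = rmax N ρ - δ (L + 1))
    (hβ3 : ∀ ℓ, L + 2 ≤ ℓ → ℓ ≤ N + 1 → β ℓ = 0)
    (hγ : γ = rmax N ρ) :
    memD N ρ α β γ ∧ ∀ w, memW N L w → Jfun L ρ w δ = Gfun N w α β γ := by
  subst hγ
  have hαL : α (L + 1) = 0 := by
    rw [hα1 (L + 1) (by omega) le_rfl, hρ0, zero_sub, max_eq_left (neg_nonpos.mpr hδ.nonneg_last)]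
  have hγβ : rmax N ρ = β (L + 1) + δ (L + 1) := by rw [hβ2, sub_add_cancel]
  refine ⟨memD_rmax hLN hδ hα1 hα2 hβ1 hβ2 hβ3, fun w hw => ?_⟩
  rw [hγβ]
  exact Jfun_eq_Gfun hLN (fun ℓ h1 h2 => hα1 ℓ h1 (by omega)) hα2 hαL hβ1 hβ3 hw.2

theorem stmt6
    (N L : ℕ) (hL1 : 1 ≤ L) (hLN : L ≤ N)
    (ρ : ℕ → ℝ)
    (hρpos : ∀ ℓ, 1 ≤ ℓ → ℓ ≤ N + 1 → ℓ ≠ L + 1 → 0 < ρ ℓ)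
    (hρ0 : ρ (L + 1) = 0)
    (δ : ℕ → ℝ) (hδ : memDelta L ρ δ)
    (α β : ℕ → ℝ) (γ : ℝ)
    (hα1 : ∀ ℓ, 1 ≤ ℓ → ℓ ≤ L + 1 → α ℓ = max 0 (ρ ℓ - δ ℓ))
    (hα2 : ∀ ℓ, L + 2 ≤ ℓ → ℓ ≤ N + 1 → α ℓ = 0)
    (hβ1 : ∀ ℓ, 1 ≤ ℓ → ℓ ≤ L → β ℓ = δ (ℓ + 1) - δ ℓ)
    (hβ2 : β (L + 1) = rmax N ρ - δ (L + 1))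
    (hβ3 : ∀ ℓ, L + 2 ≤ ℓ → ℓ ≤ N + 1 → β ℓ = 0)
    (hγ : γ = rmax N ρ) :
    memD N ρ α β γ ∧ ∀ w, memW N L w → Jfun L ρ w δ = Gfun N w α β γ :=
  stmt6_general N L hLN ρ hρ0 δ hδ α β γ hα1 hα2 hβ1 hβ2 hβ3 hγ
end

section
/- If δ ∈ Δ does not satisfy all four of properties (P1), (P2), (P3), (P4), then δ is not a Pareto cut; that is, there exists δ' ∈ Δ that dominates δ. -/
open Finset

/-- `δ'` dominates `δ` (both thought of as elements of `Δ`). -/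
def dominatesDelta (N L : ℕ) (ρ δ' δ : ℕ → ℝ) : Prop :=
  (∀ w, memW N L w → Jfun L ρ w δ' ≤ Jfun L ρ w δ) ∧
  ∃ w, memW N L w ∧ Jfun L ρ w δ' < Jfun L ρ w δ

/-- `δ` is a Pareto cut in `Δ`. -/
def paretoDelta (N L : ℕ) (ρ δ : ℕ → ℝ) : Prop :=
  ¬ ∃ δ', memDelta L ρ δ' ∧ dominatesDelta N L ρ δ' δ

/-- `T(δ) = max {ℓ ∈ {1,…,L+1} : δ ℓ ≤ ρ ℓ}`. -/
noncomputable def Tof (L : ℕ) (ρ δ : ℕ → ℝ) : ℕ :=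
  sSup {ℓ : ℕ | 1 ≤ ℓ ∧ ℓ ≤ L + 1 ∧ δ ℓ ≤ ρ ℓ}

/-- Property (P1). -/
def P1 (L : ℕ) (ρ δ : ℕ → ℝ) : Prop := 1 < Tof L ρ δ

/-- Property (P2). -/
def P2 (ρ δ : ℕ → ℝ) : Prop := δ 1 ≤ ρ 1

/-- Property (P3). -/
def P3 (L : ℕ) (ρ δ : ℕ → ℝ) : Prop :=
  ∀ ℓ, 2 ≤ ℓ → ℓ ≤ L → δ ℓ < ρ ℓ → δ ℓ = δ (ℓ + 1)

/-- Property (P4). -/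
def P4 (L : ℕ) (ρ δ : ℕ → ℝ) : Prop :=
  ∀ ℓ, Tof L ρ δ ≤ ℓ → ℓ ≤ L + 1 → δ ℓ = δ (Tof L ρ δ)

/-!
Since `max 0 (ρ ℓ - δ ℓ) + δ ℓ = max (δ ℓ) (ρ ℓ)`, the objective is
`J(w, δ) = δ(L+1) + ∑ ℓ, (max (δ ℓ) (ρ ℓ) - δ (ℓ+1)) * w ℓ`, affine in `w`. Each failing property
gives an explicit improvement. If (P2) fails, lowering `δ 1` to `ρ 1` strictly decreases the first
coefficient and no other. If (P3) fails at `k`, raising `δ k` to `min (ρ k) (δ (k+1))` leaves the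
`k`-th coefficient equal to `ρ k - δ (k+1)` and strictly decreases the `(k-1)`-st. Above `T(δ)`
one always has `ρ < δ`. If (P4) fails, then `δ(T(δ)) < δ(L+1)`; if (P1) fails, then `T(δ) = 1` and
`0 = ρ(L+1) < δ(L+1)`. Either way `δ` can be capped at a level `c < δ(L+1)` lying above every
`ρ ℓ` with `ℓ > T(δ)` and above `δ(T(δ))` (resp. `0`): the constant term drops by `δ(L+1) - c`,
which pays for the telescoping increase of the coefficients.
-/

noncomputable def Jcoeff (ρ δ : ℕ → ℝ) (ℓ : ℕ) : ℝ := max (δ ℓ) (ρ ℓ) - δ (ℓ + 1)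

lemma Jfun_eq (L : ℕ) (ρ w δ : ℕ → ℝ) :
    Jfun L ρ w δ = δ (L + 1) + ∑ ℓ ∈ Icc 1 L, Jcoeff ρ δ ℓ * w ℓ := by
  refine congrArg _ (sum_congr rfl fun ℓ _ => ?_)
  rw [Jcoeff, ← sub_self (δ ℓ), max_sub_sub_right]
  ring

lemma Jcoeff_update_of_ne {ρ δ : ℕ → ℝ} {k ℓ : ℕ} {x : ℝ} (h : ℓ ≠ k) (hsucc : ℓ + 1 ≠ k) :
    Jcoeff ρ (Function.update δ k x) ℓ = Jcoeff ρ δ ℓ := by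
  simp only [Jcoeff, Function.update_of_ne h, Function.update_of_ne hsucc]

lemma Jfun_single_succ (L : ℕ) (ρ δ : ℕ → ℝ) : Jfun L ρ (Pi.single (L + 1) 1) δ = δ (L + 1) := by
  rw [Jfun_eq, sum_eq_zero, add_zero]
  intro ℓ hℓ
  rw [Pi.single_apply, if_neg (by grind), mul_zero]

lemma max_min_eq_max_sub {a b c : ℝ} (h : a ≤ c ∨ b ≤ c) :
    max (min a c) b = max a b - (a - min a c) := by
  rcases le_total a c with hac | hca
  · simp [min_eq_left hac]
  · rw [min_eq_right hca]
    rcases h with hac | hbc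
    · simp [le_antisymm hac hca]
    · rw [max_eq_left hbc, max_eq_left (hbc.trans hca)]
      ring

lemma sub_min_le_sub_min {a b : ℝ} (c : ℝ) (h : a ≤ b) : a - min a c ≤ b - min b c := by
  rcases le_total a c with hac | hca <;> rcases le_total b c with hbc | hbc <;>
    simp only [min_eq_left, min_eq_right, *] <;> linarith

section

variable {N L : ℕ} {ρ δ δ' : ℕ → ℝ}

lemma memW_one : memW N L fun _ => 1 :=
  ⟨fun _ _ _ => ⟨zero_le_one, le_rfl⟩, rfl⟩

lemma memW_single_succ : memW N L (Pi.single (L + 1) 1) := by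
  refine ⟨fun ℓ _ _ => ?_, Pi.single_eq_same _ _⟩
  rw [Pi.single_apply]
  split_ifs <;> norm_num

lemma Jfun_le_Jfun_of_add_sum_le (hLN : L ≤ N + 1) {w : ℕ → ℝ} (hw : memW N L w)
    (h : δ' (L + 1) + ∑ ℓ ∈ Icc 1 L, max 0 (Jcoeff ρ δ' ℓ - Jcoeff ρ δ ℓ) ≤ δ (L + 1)) :
    Jfun L ρ w δ' ≤ Jfun L ρ w δ := by
  have hterm : ∀ ℓ ∈ Icc 1 L, Jcoeff ρ δ' ℓ * w ℓ ≤
      Jcoeff ρ δ ℓ * w ℓ + max 0 (Jcoeff ρ δ' ℓ - Jcoeff ρ δ ℓ) := by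
    intro ℓ hℓ
    obtain ⟨hw0, hw1⟩ := hw.1 ℓ (mem_Icc.1 hℓ).1 (by grind)
    set d := Jcoeff ρ δ' ℓ - Jcoeff ρ δ ℓ
    have hd : d * w ℓ ≤ max 0 d := by
      nlinarith [mul_nonneg (sub_nonneg.2 (le_max_right 0 d)) hw0,
        mul_nonneg (le_max_left 0 d) (sub_nonneg.2 hw1)]
    linarith
  have hsum := sum_le_sum hterm
  rw [sum_add_distrib] at hsum
  rw [Jfun_eq, Jfun_eq]
  linarith

lemma dominatesDelta_of_Jcoeff_le (hLN : L ≤ N + 1) (htop : δ' (L + 1) ≤ δ (L + 1))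
    (hle : ∀ ℓ ∈ Icc 1 L, Jcoeff ρ δ' ℓ ≤ Jcoeff ρ δ ℓ)
    (hlt : ∃ m ∈ Icc 1 L, Jcoeff ρ δ' m < Jcoeff ρ δ m) : dominatesDelta N L ρ δ' δ := by
  refine ⟨fun w hw => Jfun_le_Jfun_of_add_sum_le hLN hw ?_, _, memW_one, ?_⟩
  · rwa [sum_eq_zero fun ℓ hℓ => max_eq_left (sub_nonpos.2 (hle ℓ hℓ)), add_zero]
  · simp only [Jfun_eq, mul_one]
    linarith [sum_lt_sum hle hlt]

lemma dominatesDelta_of_add_sum_le (hLN : L ≤ N + 1) (htop : δ' (L + 1) < δ (L + 1))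
    (h : δ' (L + 1) + ∑ ℓ ∈ Icc 1 L, max 0 (Jcoeff ρ δ' ℓ - Jcoeff ρ δ ℓ) ≤ δ (L + 1)) :
    dominatesDelta N L ρ δ' δ :=
  ⟨fun _ hw => Jfun_le_Jfun_of_add_sum_le hLN hw h, _, memW_single_succ, by
    rwa [Jfun_single_succ, Jfun_single_succ]⟩

lemma memDelta.monotoneOn (hδ : memDelta L ρ δ) : MonotoneOn δ (Set.Icc 1 (L + 1)) := by
  refine monotoneOn_of_le_succ Set.ordConnected_Icc fun a _ ha hsa => ?_
  rw [Order.succ_eq_add_one] at hsa ⊢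
  exact hδ.2.1 a ha.1 (by simpa using hsa.2)

lemma memDelta.min_const (hδ : memDelta L ρ δ) {c : ℝ} (hc : 0 ≤ c) :
    memDelta L ρ fun ℓ => min (δ ℓ) c :=
  ⟨le_min hδ.1 hc, fun ℓ h1 h2 => min_le_min_right c (hδ.2.1 ℓ h1 h2),
    (min_le_left _ _).trans hδ.2.2⟩

lemma memDelta.update (hδ : memDelta L ρ δ) {k : ℕ} {x : ℝ} (hk : k ∈ Icc 1 L) (hx : 0 ≤ x)
    (hprev : ∀ ℓ ∈ Ico 1 k, δ ℓ ≤ x) (hnext : x ≤ δ (k + 1)) :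
    memDelta L ρ (Function.update δ k x) := by
  obtain ⟨hk1, hkL⟩ := mem_Icc.1 hk
  refine ⟨?_, fun ℓ h1 h2 => ?_, ?_⟩
  · rcases eq_or_ne 1 k with rfl | h
    · rwa [Function.update_self]
    · rw [Function.update_of_ne h]
      exact hδ.1
  · simp only [Function.update_apply]
    split_ifs with hℓ hℓ' hℓ'
    · omega
    · subst hℓ
      exact hnext
    · exact hprev ℓ (mem_Ico.2 ⟨h1, by omega⟩)
    · exact hδ.2.1 ℓ h1 h2
  · rw [Function.update_of_ne (by omega)]
    exact hδ.2.2

lemma Tof_mem (hδ : memDelta L ρ δ) : 1 ≤ Tof L ρ δ ∧ Tof L ρ δ ≤ L + 1 := by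
  obtain ⟨m, hm, hρm⟩ := exists_mem_eq_sup' (nonempty_Icc.2 (by omega : 1 ≤ L + 1)) ρ
  obtain ⟨hm1, hmL⟩ := mem_Icc.1 hm
  have hδm : δ m ≤ ρ m :=
    (hδ.monotoneOn ⟨hm1, hmL⟩ ⟨by omega, le_rfl⟩ hmL).trans (hδ.2.2.trans_eq hρm)
  have hT : Tof L ρ δ ∈ {ℓ : ℕ | 1 ≤ ℓ ∧ ℓ ≤ L + 1 ∧ δ ℓ ≤ ρ ℓ} :=
    Nat.sSup_mem ⟨m, hm1, hmL, hδm⟩ ⟨L + 1, fun _ hx => hx.2.1⟩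
  exact ⟨hT.1, hT.2.1⟩

lemma rho_lt_of_Tof_lt {ℓ : ℕ} (hℓ : Tof L ρ δ < ℓ) (hℓL : ℓ ≤ L + 1) : ρ ℓ < δ ℓ := by
  by_contra! h
  exact hℓ.not_ge (le_csSup ⟨L + 1, fun _ hx => hx.2.1⟩ ⟨by omega, hℓL, h⟩)

lemma dominatesDelta_min_const (hLN : L ≤ N + 1) (hδ : memDelta L ρ δ) {c : ℝ}
    (hc : c < δ (L + 1)) (hcap : ∀ ℓ ∈ Icc 2 L, δ ℓ ≤ c ∨ ρ ℓ ≤ c) :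
    dominatesDelta N L ρ (fun ℓ => min (δ ℓ) c) δ := by
  set e : ℕ → ℝ := fun ℓ => δ ℓ - min (δ ℓ) c
  set g := Function.update e 1 0
  have hterm : ∀ ℓ ∈ Icc 1 L,
      max 0 (Jcoeff ρ (fun ℓ => min (δ ℓ) c) ℓ - Jcoeff ρ δ ℓ) ≤ g (ℓ + 1) - g ℓ := by
    intro ℓ hℓ
    obtain ⟨h1, hL⟩ := mem_Icc.1 hℓ
    rw [show g (ℓ + 1) = e (ℓ + 1) from Function.update_of_ne (by omega) _ _]
    rcases h1.eq_or_lt with rfl | h2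
    · rw [show g 1 = 0 from Function.update_self _ _ _, sub_zero]
      refine max_le (sub_nonneg.2 (min_le_left _ _)) ?_
      have := max_le_max_right (ρ 1) (min_le_left (δ 1) c)
      simp only [Jcoeff, e]
      linarith
    · rw [show g ℓ = e ℓ from Function.update_of_ne (by omega) _ _]
      have hd : Jcoeff ρ (fun ℓ => min (δ ℓ) c) ℓ - Jcoeff ρ δ ℓ = e (ℓ + 1) - e ℓ := by
        simp only [Jcoeff, e, max_min_eq_max_sub (hcap ℓ (mem_Icc.2 ⟨h2, hL⟩))]
        ring
      rw [hd, max_eq_right (sub_nonneg.2 (sub_min_le_sub_min c (hδ.2.1 ℓ h1 hL)))]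
  have htop : min (δ (L + 1)) c = c := min_eq_right hc.le
  refine dominatesDelta_of_add_sum_le hLN (htop.trans_lt hc) ?_
  calc min (δ (L + 1)) c + ∑ ℓ ∈ Icc 1 L, max 0 (Jcoeff ρ (fun ℓ => min (δ ℓ) c) ℓ - Jcoeff ρ δ ℓ)
      ≤ c + ∑ ℓ ∈ Icc 1 L, (g (ℓ + 1) - g ℓ) := by rw [htop]; gcongr with ℓ hℓ; exact hterm ℓ hℓ
    _ = c + (g (L + 1) - g 1) := by rw [← Ico_add_one_right_eq_Icc, sum_Ico_sub g (by omega)]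
    _ ≤ c + (e (L + 1) - 0) := by
      gcongr
      · simp only [g, Function.update_apply]
        split_ifs
        exacts [sub_nonneg.2 (min_le_left _ _), le_rfl]
      · simp [g]
    _ = δ (L + 1) := by simp only [e, htop]; ring

lemma exists_dominatesDelta_of_rho_lt (hLN : L ≤ N + 1) (hδ : memDelta L ρ δ) {T : ℕ} {c₀ : ℝ}
    (hc₀ : 0 ≤ c₀) (hc₀top : c₀ < δ (L + 1)) (hbelow : ∀ ℓ ∈ Icc 2 L, ℓ ≤ T → δ ℓ ≤ c₀)
    (habove : ∀ ℓ ∈ Ioc T L, ρ ℓ < δ ℓ) :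
    ∃ δ', memDelta L ρ δ' ∧ dominatesDelta N L ρ δ' δ := by
  set c := (Ioc T L).fold max c₀ ρ
  have hc₀c : c₀ ≤ c := (le_fold_max _).2 (Or.inl le_rfl)
  have hc : c < δ (L + 1) := by
    refine (fold_max_lt _).2 ⟨hc₀top, fun ℓ hℓ => (habove ℓ hℓ).trans_le ?_⟩
    obtain ⟨hTℓ, hℓL⟩ := mem_Ioc.1 hℓ
    exact hδ.monotoneOn ⟨by omega, by omega⟩ ⟨by omega, le_rfl⟩ (by omega)
  refine ⟨_, hδ.min_const (hc₀.trans hc₀c), dominatesDelta_min_const hLN hδ hc fun ℓ hℓ => ?_⟩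
  by_cases hℓT : ℓ ≤ T
  · exact Or.inl ((hbelow ℓ hℓ hℓT).trans hc₀c)
  · exact Or.inr ((le_fold_max _).2 (Or.inr ⟨ℓ, mem_Ioc.2 ⟨by omega, (mem_Icc.1 hℓ).2⟩, le_rfl⟩))

lemma exists_dominatesDelta_of_not_P1 (hLN : L ≤ N + 1) (hL1 : 1 ≤ L) (hρ0 : ρ (L + 1) = 0)
    (hδ : memDelta L ρ δ) (h : ¬P1 L ρ δ) :
    ∃ δ', memDelta L ρ δ' ∧ dominatesDelta N L ρ δ' δ := by
  have hT : Tof L ρ δ ≤ 1 := not_lt.1 h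
  have htop : 0 < δ (L + 1) := hρ0 ▸ rho_lt_of_Tof_lt (by omega) le_rfl
  refine exists_dominatesDelta_of_rho_lt hLN hδ le_rfl htop (T := Tof L ρ δ)
    (fun ℓ hℓ hℓT => absurd (mem_Icc.1 hℓ).1 (by omega)) fun ℓ hℓ => ?_
  obtain ⟨hTℓ, hℓL⟩ := mem_Ioc.1 hℓ
  exact rho_lt_of_Tof_lt hTℓ (by omega)

lemma exists_dominatesDelta_of_not_P2 (hLN : L ≤ N + 1) (hL1 : 1 ≤ L) (hρ1 : 0 ≤ ρ 1)
    (hδ : memDelta L ρ δ) (h : ¬P2 ρ δ) :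
    ∃ δ', memDelta L ρ δ' ∧ dominatesDelta N L ρ δ' δ := by
  have h : ρ 1 < δ 1 := not_le.1 h
  have hlt : Jcoeff ρ (Function.update δ 1 (ρ 1)) 1 < Jcoeff ρ δ 1 := by
    simp only [Jcoeff, Function.update_self, Function.update_of_ne (show 1 + 1 ≠ 1 by omega),
      max_self, max_eq_left h.le]
    linarith
  have hle : ∀ ℓ ∈ Icc 1 L, Jcoeff ρ (Function.update δ 1 (ρ 1)) ℓ ≤ Jcoeff ρ δ ℓ := by
    intro ℓ hℓ
    rcases eq_or_ne ℓ 1 with rfl | hne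
    · exact hlt.le
    · rw [Jcoeff_update_of_ne hne (by grind)]
  refine ⟨_, hδ.update (mem_Icc.2 ⟨le_rfl, hL1⟩) hρ1 (by simp)
      (h.le.trans (hδ.2.1 1 le_rfl hL1)), dominatesDelta_of_Jcoeff_le hLN ?_ hle
      ⟨1, mem_Icc.2 ⟨le_rfl, hL1⟩, hlt⟩⟩
  rw [Function.update_of_ne (by omega)]

lemma exists_dominatesDelta_of_not_P3 (hLN : L ≤ N + 1) (hδ : memDelta L ρ δ) (h : ¬P3 L ρ δ) :
    ∃ δ', memDelta L ρ δ' ∧ dominatesDelta N L ρ δ' δ := by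
  simp only [P3, not_forall] at h
  obtain ⟨k, hk2, hkL, hkρ, hkne⟩ := h
  set c := min (ρ k) (δ (k + 1))
  have hkc : δ k < c := lt_min hkρ ((hδ.2.1 k (by omega) hkL).lt_of_ne hkne)
  have hbelow : ∀ ℓ ∈ Ico 1 k, δ ℓ ≤ c := fun ℓ hℓ =>
    (hδ.monotoneOn ⟨(mem_Ico.1 hℓ).1, by grind⟩ ⟨by omega, by omega⟩ (mem_Ico.1 hℓ).2.le).trans
      hkc.le
  have hlt : Jcoeff ρ (Function.update δ k c) (k - 1) < Jcoeff ρ δ (k - 1) := by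
    simp only [Jcoeff, Nat.sub_add_cancel (by omega : 1 ≤ k), Function.update_self,
      Function.update_of_ne (show k - 1 ≠ k by omega)]
    linarith
  have hle : ∀ ℓ ∈ Icc 1 L, Jcoeff ρ (Function.update δ k c) ℓ ≤ Jcoeff ρ δ ℓ := by
    intro ℓ hℓ
    by_cases hℓk : ℓ = k
    · subst hℓk
      simp only [Jcoeff, Function.update_self, Function.update_of_ne (show ℓ + 1 ≠ ℓ by omega),
        max_eq_right (show c ≤ ρ ℓ from min_le_left _ _), max_eq_right hkρ.le, le_refl]
    by_cases hℓk' : ℓ + 1 = k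
    · exact (show ℓ = k - 1 by omega) ▸ hlt.le
    · rw [Jcoeff_update_of_ne hℓk hℓk']
  refine ⟨_, hδ.update (mem_Icc.2 ⟨by omega, hkL⟩) ((hbelow 1 (by simp; omega)).trans' hδ.1)
      hbelow (min_le_right _ _), dominatesDelta_of_Jcoeff_le hLN ?_ hle
      ⟨k - 1, mem_Icc.2 ⟨by omega, by omega⟩, hlt⟩⟩
  rw [Function.update_of_ne (by omega)]

lemma exists_dominatesDelta_of_not_P4 (hLN : L ≤ N + 1) (hδ : memDelta L ρ δ) (h : ¬P4 L ρ δ) :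
    ∃ δ', memDelta L ρ δ' ∧ dominatesDelta N L ρ δ' δ := by
  obtain ⟨hT1, hTL⟩ := Tof_mem hδ
  simp only [P4, not_forall] at h
  obtain ⟨j, hTj, hjL, hj⟩ := h
  have hmono := hδ.monotoneOn
  have htop : δ (Tof L ρ δ) < δ (L + 1) :=
    ((hmono ⟨hT1, hTL⟩ ⟨by omega, hjL⟩ hTj).lt_of_ne (Ne.symm hj)).trans_le
      (hmono ⟨by omega, hjL⟩ ⟨by omega, le_rfl⟩ hjL)
  refine exists_dominatesDelta_of_rho_lt hLN hδ
    (hδ.1.trans (hmono ⟨le_rfl, by omega⟩ ⟨hT1, hTL⟩ hT1)) htop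
    (fun ℓ hℓ hℓT => hmono ⟨by grind, by grind⟩ ⟨hT1, hTL⟩ hℓT) fun ℓ hℓ => ?_
  obtain ⟨hTℓ, hℓL⟩ := mem_Ioc.1 hℓ
  exact rho_lt_of_Tof_lt hTℓ (by omega)

end

theorem stmt9
    (N L : ℕ) (hL1 : 1 ≤ L) (hLN : L ≤ N)
    (ρ : ℕ → ℝ)
    (hρpos : ∀ ℓ, 1 ≤ ℓ → ℓ ≤ N + 1 → ℓ ≠ L + 1 → 0 < ρ ℓ)
    (hρ0 : ρ (L + 1) = 0)
    (δ : ℕ → ℝ) (hδ : memDelta L ρ δ)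
    (h : ¬ (P1 L ρ δ ∧ P2 ρ δ ∧ P3 L ρ δ ∧ P4 L ρ δ)) :
    ∃ δ', memDelta L ρ δ' ∧ dominatesDelta N L ρ δ' δ := by
  have hLN' : L ≤ N + 1 := Nat.le_succ_of_le hLN
  simp only [not_and_or] at h
  rcases h with h1 | h2 | h3 | h4
  · exact exists_dominatesDelta_of_not_P1 hLN' hL1 hρ0 hδ h1
  · exact exists_dominatesDelta_of_not_P2 hLN' hL1 (hρpos 1 le_rfl (by omega) (by omega)).le hδ h2
  · exact exists_dominatesDelta_of_not_P3 hLN' hδ h3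
  · exact exists_dominatesDelta_of_not_P4 hLN' hδ h4
end

section
/- Let δ ∈ Δ. Then δ is a Pareto cut if and only if there does not exist δ' ∈ Δ that satisfies all four of properties (P1), (P2), (P3), (P4) and dominates δ. -/
/-!
Only the "if" direction needs work: every `δ ∈ Δ` can be replaced by some `δ'' ∈ Δ` satisfying
(P1)–(P4) with `J(·, δ'') ≤ J(·, δ)` on `W`, so a dominating cut can always be chosen with
(P1)–(P4). The replacement takes two moves. A downward sweep (`raiseCut`) enforces (P2) and (P3)
and lowers every coefficient of `J`. Then capping at `v = max_{b ∈ [2, L+1]} min (ρ b) (δ b)`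
makes the vector constant from a maximiser `b ≥ 2` on, where `δ b ≤ ρ b`; this gives (P1) and (P4).
Capping lowers `J` once `J` is written as
`δ 1 + Σ_ℓ (w ℓ (ρ ℓ - δ ℓ)⁺ + (1 - w ℓ) (δ (ℓ + 1) - δ ℓ))`.
-/

open Finset

theorem monotoneOn_Icc_of_le_succ {L : ℕ} {δ : ℕ → ℝ}
    (hstep : ∀ ℓ, 1 ≤ ℓ → ℓ ≤ L → δ ℓ ≤ δ (ℓ + 1)) : MonotoneOn δ (Set.Icc 1 (L + 1)) :=
  monotoneOn_of_le_succ Set.ordConnected_Icc fun ℓ _ hℓ hℓ' => by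
    simp only [Set.mem_Icc, Order.succ_eq_add_one] at hℓ hℓ'
    exact hstep ℓ hℓ.1 (by omega)

section Tof

variable {L ℓ : ℕ} {ρ δ : ℕ → ℝ}

theorem le_Tof (h1 : 1 ≤ ℓ) (hL : ℓ ≤ L + 1) (hδρ : δ ℓ ≤ ρ ℓ) : ℓ ≤ Tof L ρ δ :=
  le_csSup ⟨L + 1, fun _ h => h.2.1⟩ ⟨h1, hL, hδρ⟩

theorem Tof_le : Tof L ρ δ ≤ L + 1 :=
  csSup_le' fun _ h => h.2.1

end Tof

section Jfun

variable {L : ℕ} {ρ w δ δ' : ℕ → ℝ}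

theorem Jfun_le_of_coeff_le (hw : ∀ ℓ, 1 ≤ ℓ → ℓ ≤ L → 0 ≤ w ℓ)
    (htop : δ' (L + 1) ≤ δ (L + 1))
    (hcoeff : ∀ ℓ, 1 ≤ ℓ → ℓ ≤ L →
      max 0 (ρ ℓ - δ' ℓ) - (δ' (ℓ + 1) - δ' ℓ) ≤ max 0 (ρ ℓ - δ ℓ) - (δ (ℓ + 1) - δ ℓ)) :
    Jfun L ρ w δ' ≤ Jfun L ρ w δ := by
  refine add_le_add htop (sum_le_sum fun ℓ hℓ => ?_)
  rw [mem_Icc] at hℓ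
  exact mul_le_mul_of_nonneg_right (hcoeff ℓ hℓ.1 hℓ.2) (hw ℓ hℓ.1 hℓ.2)

/-- Summation by parts. -/
theorem Jfun_eq_add_sum (hL : 1 ≤ L) :
    Jfun L ρ w δ = δ 1 +
      ∑ ℓ ∈ Icc 1 L, (w ℓ * max 0 (ρ ℓ - δ ℓ) + (1 - w ℓ) * (δ (ℓ + 1) - δ ℓ)) := by
  rw [Jfun, ← sub_add_cancel (δ (L + 1)) (δ 1), ← sum_Icc_sub hL δ, add_comm _ (δ 1), add_assoc,
    ← sum_add_distrib]
  congr 1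
  exact sum_congr rfl fun ℓ _ => by ring

end Jfun

noncomputable def raiseCut (L : ℕ) (ρ δ : ℕ → ℝ) (ℓ : ℕ) : ℝ :=
  if L < ℓ then δ ℓ
  else if 2 ≤ ℓ ∧ ρ ℓ ≤ δ ℓ then δ ℓ
  else min (ρ ℓ) (raiseCut L ρ δ (ℓ + 1))
termination_by L + 1 - ℓ

section raiseCut

variable {L ℓ : ℕ} {ρ w δ : ℕ → ℝ}

theorem raiseCut_of_lt (h : L < ℓ) : raiseCut L ρ δ ℓ = δ ℓ := by
  rw [raiseCut, if_pos h]

theorem raiseCut_of_le (h : ℓ ≤ L) :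
    raiseCut L ρ δ ℓ =
      if 2 ≤ ℓ ∧ ρ ℓ ≤ δ ℓ then δ ℓ else min (ρ ℓ) (raiseCut L ρ δ (ℓ + 1)) := by
  rw [raiseCut, if_neg (not_lt.2 h)]

theorem raiseCut_one (hL : 1 ≤ L) : raiseCut L ρ δ 1 = min (ρ 1) (raiseCut L ρ δ 2) := by
  simp [raiseCut_of_le hL]

theorem le_raiseCut (hstep : ∀ ℓ, 1 ≤ ℓ → ℓ ≤ L → δ ℓ ≤ δ (ℓ + 1)) {ℓ : ℕ} (h2 : 2 ≤ ℓ) :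
    δ ℓ ≤ raiseCut L ρ δ ℓ := by
  rcases lt_or_ge L ℓ with hlt | hle
  · rw [raiseCut_of_lt hlt]
  rw [raiseCut_of_le hle]
  split_ifs with hkeep
  · rfl
  · have hδρ : δ ℓ < ρ ℓ := lt_of_not_ge fun h => hkeep ⟨h2, h⟩
    exact le_min hδρ.le ((hstep ℓ (by omega) hle).trans
      (le_raiseCut hstep (ℓ := ℓ + 1) (by omega)))
termination_by L + 1 - ℓ

theorem raiseCut_le_succ (hstep : ∀ ℓ, 1 ≤ ℓ → ℓ ≤ L → δ ℓ ≤ δ (ℓ + 1)) (h1 : 1 ≤ ℓ)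
    (hL : ℓ ≤ L) : raiseCut L ρ δ ℓ ≤ raiseCut L ρ δ (ℓ + 1) := by
  rw [raiseCut_of_le hL]
  split_ifs
  · exact (hstep ℓ h1 hL).trans (le_raiseCut hstep (by omega))
  · exact min_le_right _ _

theorem memDelta_raiseCut (hL : 1 ≤ L) (hρ1 : 0 ≤ ρ 1) (hδ : memDelta L ρ δ) :
    memDelta L ρ (raiseCut L ρ δ) := by
  refine ⟨?_, fun ℓ h1 hℓ => raiseCut_le_succ hδ.2.1 h1 hℓ, ?_⟩
  · rw [raiseCut_one hL]
    exact le_min hρ1 ((hδ.1.trans (hδ.2.1 1 le_rfl hL)).trans (le_raiseCut hδ.2.1 le_rfl))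
  · rw [raiseCut_of_lt (Nat.lt_succ_self L)]
    exact hδ.2.2

theorem P2_raiseCut (hL : 1 ≤ L) : P2 ρ (raiseCut L ρ δ) := by
  rw [P2, raiseCut_one hL]
  exact min_le_left _ _

theorem P3_raiseCut : P3 L ρ (raiseCut L ρ δ) := by
  intro ℓ h2 hL hlt
  rw [raiseCut_of_le hL] at hlt ⊢
  split_ifs at hlt ⊢ with hkeep
  · exact absurd hkeep.2 (not_le.2 hlt)
  · exact min_eq_right (le_of_not_ge fun h => hlt.ne (min_eq_left h))

/-- Every coefficient of `w` in `J` goes down: a kept entry only sees its successor rise, and a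
replaced entry has coefficient `ρ ℓ - raiseCut (ℓ + 1) ≤ ρ ℓ - δ (ℓ + 1)`. -/
theorem Jfun_raiseCut_le (hstep : ∀ ℓ, 1 ≤ ℓ → ℓ ≤ L → δ ℓ ≤ δ (ℓ + 1))
    (hw : ∀ ℓ, 1 ≤ ℓ → ℓ ≤ L → 0 ≤ w ℓ) : Jfun L ρ w (raiseCut L ρ δ) ≤ Jfun L ρ w δ := by
  refine Jfun_le_of_coeff_le hw (raiseCut_of_lt (Nat.lt_succ_self L)).le fun ℓ h1 hL => ?_
  have hnext : δ (ℓ + 1) ≤ raiseCut L ρ δ (ℓ + 1) := le_raiseCut hstep (by omega)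
  rw [raiseCut_of_le hL]
  split_ifs
  · linarith
  · have hmin := min_le_left (ρ ℓ) (raiseCut L ρ δ (ℓ + 1))
    rw [max_eq_right (by linarith)]
    linarith [le_max_right 0 (ρ ℓ - δ ℓ)]

end raiseCut

section Cap

variable {L : ℕ} {ρ w δ : ℕ → ℝ} {v : ℝ}

/-- Above the cap `ρ ℓ ≤ v` (except possibly at `ℓ = 1`), so no positive part grows there;
at `ℓ = 1` the growth of `max 0 (ρ 1 - ·)` is paid for by the drop of `δ 1`. -/
theorem Jfun_min_le (hL : 1 ≤ L) (hstep : ∀ ℓ, 1 ≤ ℓ → ℓ ≤ L → δ ℓ ≤ δ (ℓ + 1))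
    (hw : ∀ ℓ, 1 ≤ ℓ → ℓ ≤ L → 0 ≤ w ℓ ∧ w ℓ ≤ 1)
    (hcap : ∀ ℓ, 2 ≤ ℓ → ℓ ≤ L → v < δ ℓ → ρ ℓ ≤ v) :
    Jfun L ρ w (fun ℓ => min (δ ℓ) v) ≤ Jfun L ρ w δ := by
  have hterm : ∀ ℓ ∈ Icc 1 L,
      w ℓ * max 0 (ρ ℓ - min (δ ℓ) v) + (1 - w ℓ) * (min (δ (ℓ + 1)) v - min (δ ℓ) v) ≤
        w ℓ * max 0 (ρ ℓ - δ ℓ) + (1 - w ℓ) * (δ (ℓ + 1) - δ ℓ) +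
          if ℓ = 1 then δ 1 - min (δ 1) v else 0 := by
    intro ℓ hℓ
    rw [mem_Icc] at hℓ
    obtain ⟨hw0, hw1⟩ := hw ℓ hℓ.1 hℓ.2
    have hinc := hstep ℓ hℓ.1 hℓ.2
    have hpos := le_max_left 0 (ρ ℓ - δ ℓ)
    rcases le_or_gt (δ ℓ) v with hle | hlt
    · have hite : 0 ≤ if ℓ = 1 then δ 1 - min (δ 1) v else 0 := by
        split_ifs
        · linarith [min_le_left (δ 1) v]
        · rfl
      rw [min_eq_left hle]
      nlinarith [min_le_left (δ (ℓ + 1)) v]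
    · rw [min_eq_right hlt.le, min_eq_right (hlt.trans_le hinc).le, sub_self, mul_zero, add_zero]
      rcases eq_or_ne ℓ 1 with rfl | hne
      · have hlip : max 0 (ρ 1 - v) ≤ max 0 (ρ 1 - δ 1) + (δ 1 - v) :=
          max_le (by linarith) (by linarith [le_max_right 0 (ρ 1 - δ 1)])
        rw [if_pos rfl, min_eq_right hlt.le]
        nlinarith
      · rw [if_neg hne, max_eq_left (by linarith [hcap ℓ (by omega) hℓ.2 hlt])]
        nlinarith
  rw [Jfun_eq_add_sum hL, Jfun_eq_add_sum hL]
  calc min (δ 1) v + ∑ ℓ ∈ Icc 1 L,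
        (w ℓ * max 0 (ρ ℓ - min (δ ℓ) v) + (1 - w ℓ) * (min (δ (ℓ + 1)) v - min (δ ℓ) v))
      ≤ min (δ 1) v + ∑ ℓ ∈ Icc 1 L,
        (w ℓ * max 0 (ρ ℓ - δ ℓ) + (1 - w ℓ) * (δ (ℓ + 1) - δ ℓ) +
          if ℓ = 1 then δ 1 - min (δ 1) v else 0) := (add_le_add_iff_left _).2 (sum_le_sum hterm)
    _ = δ 1 + ∑ ℓ ∈ Icc 1 L, (w ℓ * max 0 (ρ ℓ - δ ℓ) + (1 - w ℓ) * (δ (ℓ + 1) - δ ℓ)) := by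
      rw [sum_add_distrib, sum_ite_eq', if_pos (mem_Icc.mpr ⟨le_rfl, hL⟩)]
      ring

theorem memDelta_min (hδ : memDelta L ρ δ) (hv : 0 ≤ v) :
    memDelta L ρ (fun ℓ => min (δ ℓ) v) :=
  ⟨le_min hδ.1 hv, fun ℓ h1 hL => min_le_min_right v (hδ.2.1 ℓ h1 hL),
    (min_le_left _ _).trans hδ.2.2⟩

theorem P3_min (hδ : P3 L ρ δ) (hcap : ∀ ℓ, 2 ≤ ℓ → ℓ ≤ L → v < δ ℓ → ρ ℓ ≤ v) :
    P3 L ρ (fun ℓ => min (δ ℓ) v) := by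
  intro ℓ h2 hL hlt
  rcases le_or_gt (δ ℓ) v with hle | hgt
  · simp only [min_eq_left hle] at hlt ⊢
    rw [← hδ ℓ h2 hL hlt, min_eq_left hle]
  · simp only [min_eq_right hgt.le] at hlt
    linarith [hcap ℓ h2 hL hgt]

theorem P1_P4_min (hmono : MonotoneOn δ (Set.Icc 1 (L + 1))) {b : ℕ} (hb : 2 ≤ b)
    (hbL : b ≤ L + 1) (hvρ : v ≤ ρ b) (hvδ : v ≤ δ b) :
    P1 L ρ (fun ℓ => min (δ ℓ) v) ∧ P4 L ρ (fun ℓ => min (δ ℓ) v) := by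
  have hconst : ∀ ℓ, b ≤ ℓ → ℓ ≤ L + 1 → min (δ ℓ) v = v := fun ℓ hbℓ hℓ =>
    min_eq_right (hvδ.trans (hmono ⟨by omega, hbL⟩ ⟨by omega, hℓ⟩ hbℓ))
  have hbT : b ≤ Tof L ρ (fun ℓ => min (δ ℓ) v) :=
    le_Tof (by omega) hbL (by simp only [hconst b le_rfl hbL, hvρ])
  refine ⟨by unfold P1; omega, fun ℓ hTℓ hℓ => ?_⟩
  simp only [hconst ℓ (hbT.trans hTℓ) hℓ, hconst _ hbT Tof_le]

theorem exists_P_Jfun_le_of_P2_P3 (hL : 1 ≤ L) (hρ : ρ (L + 1) = 0) (hδ : memDelta L ρ δ)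
    (h2 : P2 ρ δ) (h3 : P3 L ρ δ) :
    ∃ δ', memDelta L ρ δ' ∧ (P1 L ρ δ' ∧ P2 ρ δ' ∧ P3 L ρ δ' ∧ P4 L ρ δ') ∧
      ∀ w : ℕ → ℝ, (∀ ℓ, 1 ≤ ℓ → ℓ ≤ L → 0 ≤ w ℓ ∧ w ℓ ≤ 1) →
        Jfun L ρ w δ' ≤ Jfun L ρ w δ := by
  obtain ⟨b, hb, hbmax⟩ := (Icc 2 (L + 1)).exists_max_image (fun ℓ => min (ρ ℓ) (δ ℓ))
    (nonempty_Icc.2 (by omega))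
  rw [mem_Icc] at hb
  have hmono := monotoneOn_Icc_of_le_succ hδ.2.1
  have hv0 : 0 ≤ min (ρ b) (δ b) := by
    have htop := hbmax (L + 1) (mem_Icc.2 ⟨by omega, le_rfl⟩)
    have hδtop : 0 ≤ δ (L + 1) :=
      hδ.1.trans (hmono ⟨le_rfl, by omega⟩ ⟨by omega, le_rfl⟩ (by omega))
    simp only [hρ, min_eq_left hδtop] at htop
    exact htop
  have hcap : ∀ ℓ, 2 ≤ ℓ → ℓ ≤ L → min (ρ b) (δ b) < δ ℓ → ρ ℓ ≤ min (ρ b) (δ b) :=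
    fun ℓ h2 hL hlt => not_lt.1 fun hρℓ =>
      (hbmax ℓ (mem_Icc.2 ⟨h2, by omega⟩)).not_gt (lt_min hρℓ hlt)
  obtain ⟨hP1, hP4⟩ := P1_P4_min hmono hb.1 hb.2 (min_le_left _ _) (min_le_right _ _)
  exact ⟨_, memDelta_min hδ hv0, ⟨hP1, (min_le_left _ _).trans h2, P3_min h3 hcap, hP4⟩,
    fun w hw => Jfun_min_le hL hδ.2.1 hw hcap⟩

end Cap

theorem exists_P_Jfun_le {N L : ℕ} {ρ δ : ℕ → ℝ} (hL : 1 ≤ L) (hLN : L ≤ N) (hρ1 : 0 ≤ ρ 1)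
    (hρ : ρ (L + 1) = 0) (hδ : memDelta L ρ δ) :
    ∃ δ', memDelta L ρ δ' ∧ (P1 L ρ δ' ∧ P2 ρ δ' ∧ P3 L ρ δ' ∧ P4 L ρ δ') ∧
      ∀ w, memW N L w → Jfun L ρ w δ' ≤ Jfun L ρ w δ := by
  obtain ⟨δ', hδ', hP, hJ⟩ := exists_P_Jfun_le_of_P2_P3 hL hρ
    (memDelta_raiseCut hL hρ1 hδ) (P2_raiseCut hL) P3_raiseCut
  refine ⟨δ', hδ', hP, fun w hw => ?_⟩
  have hw' : ∀ ℓ, 1 ≤ ℓ → ℓ ≤ L → 0 ≤ w ℓ ∧ w ℓ ≤ 1 := fun ℓ h1 hℓ => hw.1 ℓ h1 (by omega)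
  exact (hJ w hw').trans (Jfun_raiseCut_le hδ.2.1 fun ℓ h1 hℓ => (hw' ℓ h1 hℓ).1)

theorem dominatesDelta.of_Jfun_le {N L : ℕ} {ρ δ δ' δ'' : ℕ → ℝ}
    (hle : ∀ w, memW N L w → Jfun L ρ w δ'' ≤ Jfun L ρ w δ')
    (h : dominatesDelta N L ρ δ' δ) : dominatesDelta N L ρ δ'' δ :=
  ⟨fun w hw => (hle w hw).trans (h.1 w hw),
    let ⟨w, hw, hlt⟩ := h.2; ⟨w, hw, (hle w hw).trans_lt hlt⟩⟩

theorem stmt11_general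
    (N L : ℕ) (hL1 : 1 ≤ L) (hLN : L ≤ N)
    (ρ : ℕ → ℝ)
    (hρpos : ∀ ℓ, 1 ≤ ℓ → ℓ ≤ N + 1 → ℓ ≠ L + 1 → 0 < ρ ℓ)
    (hρ0 : ρ (L + 1) = 0)
    (δ : ℕ → ℝ) :
    paretoDelta N L ρ δ ↔
      ¬ ∃ δ', memDelta L ρ δ' ∧
        (P1 L ρ δ' ∧ P2 ρ δ' ∧ P3 L ρ δ' ∧ P4 L ρ δ') ∧
        dominatesDelta N L ρ δ' δ := by
  refine ⟨fun hpar ⟨δ', hδ', _, hdom⟩ => hpar ⟨δ', hδ', hdom⟩, fun hno ⟨δ', hδ', hdom⟩ => ?_⟩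
  obtain ⟨δ'', hδ'', hP, hle⟩ :=
    exists_P_Jfun_le hL1 hLN (hρpos 1 le_rfl (by omega) (by omega)).le hρ0 hδ'
  exact hno ⟨δ'', hδ'', hP, hdom.of_Jfun_le hle⟩

theorem stmt11
    (N L : ℕ) (hL1 : 1 ≤ L) (hLN : L ≤ N)
    (ρ : ℕ → ℝ)
    (hρpos : ∀ ℓ, 1 ≤ ℓ → ℓ ≤ N + 1 → ℓ ≠ L + 1 → 0 < ρ ℓ)
    (hρ0 : ρ (L + 1) = 0)
    (δ : ℕ → ℝ) (hδ : memDelta L ρ δ) :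
    paretoDelta N L ρ δ ↔
      ¬ ∃ δ', memDelta L ρ δ' ∧
        (P1 L ρ δ' ∧ P2 ρ δ' ∧ P3 L ρ δ' ∧ P4 L ρ δ') ∧
        dominatesDelta N L ρ δ' δ :=
  stmt11_general N L hL1 hLN ρ hρpos hρ0 δ
end

section
/- Let δ, δ' ∈ Δ both satisfy all four of properties (P1), (P2), (P3), (P4). If δ'(L+1) > δ(L+1), then δ' does not dominate δ. -/
open Finset

noncomputable def noPurchaseWeight (L : ℕ) : ℕ → ℝ := Pi.single (L + 1) 1

theorem memW_noPurchaseWeight (N L : ℕ) : memW N L (noPurchaseWeight L) := by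
  refine ⟨fun ℓ _ _ => ?_, Pi.single_eq_same _ _⟩
  by_cases h : ℓ = L + 1
  · subst h; simp [noPurchaseWeight]
  · simp [noPurchaseWeight, Pi.single_eq_of_ne h]

theorem Jfun_noPurchaseWeight (L : ℕ) (ρ δ : ℕ → ℝ) :
    Jfun L ρ (noPurchaseWeight L) δ = δ (L + 1) := by
  rw [Jfun, sum_eq_zero fun ℓ hℓ => ?_, add_zero]
  rw [noPurchaseWeight, Pi.single_eq_of_ne (by grind), mul_zero]

theorem dominatesDelta.le_last {N L : ℕ} {ρ δ' δ : ℕ → ℝ} (h : dominatesDelta N L ρ δ' δ) :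
    δ' (L + 1) ≤ δ (L + 1) := by
  simpa only [Jfun_noPurchaseWeight] using h.1 _ (memW_noPurchaseWeight N L)

theorem stmt14_general
    (N L : ℕ)
    (ρ : ℕ → ℝ)
    (δ δ' : ℕ → ℝ)
    (hgt : δ (L + 1) < δ' (L + 1)) :
    ¬ dominatesDelta N L ρ δ' δ :=
  fun h => h.le_last.not_gt hgt

theorem stmt14
    (N L : ℕ) (hL1 : 1 ≤ L) (hLN : L ≤ N)
    (ρ : ℕ → ℝ)
    (hρpos : ∀ ℓ, 1 ≤ ℓ → ℓ ≤ N + 1 → ℓ ≠ L + 1 → 0 < ρ ℓ)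
    (hρ0 : ρ (L + 1) = 0)
    (δ δ' : ℕ → ℝ) (hδ : memDelta L ρ δ) (hδ' : memDelta L ρ δ')
    (hP : P1 L ρ δ ∧ P2 ρ δ ∧ P3 L ρ δ ∧ P4 L ρ δ)
    (hP' : P1 L ρ δ' ∧ P2 ρ δ' ∧ P3 L ρ δ' ∧ P4 L ρ δ')
    (hgt : δ (L + 1) < δ' (L + 1)) :
    ¬ dominatesDelta N L ρ δ' δ :=
  stmt14_general N L ρ δ δ' hgt
end
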